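/- arXiv:1404.4250 — 8 statements merged into one kernel-verified Lean document; each statement's English description precedes it below -/
import Mathlib

section
/- Let f : ℕ × ℕ → ℕ satisfy f(m,0) = f(0,n) = 1 and f(m+1,n+1) = f(m+1,n) + f(m,n+1) + f(m,n). Then f(m,n) equals the number of sequences (W_1,…,W_t) of nonempty subsets of {0,1} such that 0 occurs in exactly m of the sets W_i and 1 occurs in exactly n of the sets W_i. -/
/-! A nonempty subset of `{0,1}` is one of the three steps `{0}`, `{1}`, `{0,1}` of a Delannoy
lattice path, so the sequences in question are the Delannoy paths from `(0,0)` to `(m,n)`.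
Splitting off the first set gives the Delannoy recurrence for their number, and the boundary
cases have exactly one such sequence. -/

theorem Fin2.finset_cases (A : Finset (Fin 2)) : A = ∅ ∨ A = {0} ∨ A = {1} ∨ A = {0, 1} := by
  revert A; decide

theorem List.disjoint_image_cons {α : Type*} {a b : α} (hab : a ≠ b) (s t : Set (List α)) :
    _root_.Disjoint (List.cons a '' s) (List.cons b '' t) :=
  Set.disjoint_left.2 fun _ ⟨_, _, hx⟩ ⟨_, _, hy⟩ => hab (List.cons.inj (hx.trans hy.symm)).1

def executions (m n : ℕ) : Set (List (Finset (Fin 2))) :=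
  {L | (∀ A ∈ L, A.Nonempty) ∧
    L.countP (fun A => decide ((0 : Fin 2) ∈ A)) = m ∧
    L.countP (fun A => decide ((1 : Fin 2) ∈ A)) = n}

theorem executions_zero_zero : executions 0 0 = {[]} := by
  ext (_ | ⟨A, T⟩)
  · simp [executions]
  · rcases Fin2.finset_cases A with rfl | rfl | rfl | rfl <;> simp [executions]

theorem executions_succ_zero (m : ℕ) :
    executions (m + 1) 0 = List.cons {0} '' executions m 0 := by
  ext (_ | ⟨A, T⟩)
  · simp [executions]
  · rcases Fin2.finset_cases A with rfl | rfl | rfl | rfl <;> simp +decide [executions]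

theorem executions_zero_succ (n : ℕ) :
    executions 0 (n + 1) = List.cons {1} '' executions 0 n := by
  ext (_ | ⟨A, T⟩)
  · simp [executions]
  · rcases Fin2.finset_cases A with rfl | rfl | rfl | rfl <;> simp +decide [executions]

theorem executions_succ_succ (m n : ℕ) : executions (m + 1) (n + 1) =
    List.cons {0} '' executions m (n + 1) ∪ List.cons {1} '' executions (m + 1) n ∪
      List.cons {0, 1} '' executions m n := by
  ext (_ | ⟨A, T⟩)
  · simp [executions]
  · rcases Fin2.finset_cases A with rfl | rfl | rfl | rfl <;> simp +decide [executions]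

-- Counting with `encard` makes disjoint unions additive without finiteness side conditions.
theorem encard_executions_zero_right (m : ℕ) : (executions m 0).encard = 1 := by
  induction m with
  | zero => rw [executions_zero_zero, Set.encard_singleton]
  | succ m ih => rw [executions_succ_zero, List.cons_injective.encard_image, ih]

theorem encard_executions_zero_left (n : ℕ) : (executions 0 n).encard = 1 := by
  induction n with
  | zero => rw [executions_zero_zero, Set.encard_singleton]
  | succ n ih => rw [executions_zero_succ, List.cons_injective.encard_image, ih]

theorem encard_executions_succ_succ (m n : ℕ) :
    (executions (m + 1) (n + 1)).encard = (executions (m + 1) n).encard +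
      (executions m (n + 1)).encard + (executions m n).encard := by
  rw [executions_succ_succ, Set.encard_union_eq, Set.encard_union_eq]
  · simp only [List.cons_injective.encard_image]
    ring
  · exact List.disjoint_image_cons (by decide) _ _
  · exact (List.disjoint_image_cons (by decide) _ _).union_left
      (List.disjoint_image_cons (by decide) _ _)

/-- `f(m,n)` counts the sequences `(W_1,…,W_t)` of nonempty subsets of
`{0,1}` in which `0` occurs exactly `m` times and `1` occurs exactly `n` times
(the top-dimensional simplices of `P(m,n)`). -/
theorem delannoy_counts_executions (f : ℕ → ℕ → ℕ)
    (hf0 : ∀ m, f m 0 = 1) (h0f : ∀ n, f 0 n = 1)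
    (hrec : ∀ m n, f (m + 1) (n + 1) = f (m + 1) n + f m (n + 1) + f m n) :
    ∀ m n, f m n = Nat.card {L : List (Finset (Fin 2)) //
      (∀ A ∈ L, A.Nonempty) ∧
      L.countP (fun A => decide ((0 : Fin 2) ∈ A)) = m ∧
      L.countP (fun A => decide ((1 : Fin 2) ∈ A)) = n} := by
  have encard_eq : ∀ m n, (executions m n).encard = f m n := by
    intro m
    induction m with
    | zero => intro n; rw [encard_executions_zero_left, h0f, Nat.cast_one]
    | succ m ih =>
      intro n
      induction n with
      | zero => rw [encard_executions_zero_right, hf0, Nat.cast_one]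
      | succ n ihn =>
        rw [encard_executions_succ_succ, ihn, ih, ih, hrec]
        push_cast
        ring
  intro m n
  change f m n = Nat.card (executions m n)
  rw [Nat.card_coe_set_eq, Set.ncard_def, encard_eq, ENat.toNat_natCast]
end

section
/- Let f : ℕ × ℕ → ℕ satisfy f(m,0) = f(0,n) = 1 and f(m+1,n+1) = f(m+1,n) + f(m,n+1) + f(m,n). Then for all m, n we have f(m,n) = Σ_{k=0}^{min(m,n)} (choose(m,k) * choose(n,k) * 2^k). -/
private def Dsum (a b N : ℕ) : ℕ :=
  ∑ k ∈ Finset.range N, a.choose k * b.choose k * 2 ^ k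

private lemma Dsum_stable (a b : ℕ) : ∀ {N M : ℕ}, min a b < N → N ≤ M →
    Dsum a b M = Dsum a b N := by
  intro N M hN hNM
  unfold Dsum
  refine (Finset.sum_subset (Finset.range_subset_range.2 hNM) ?_).symm
  intro k hk hk'
  simp only [Finset.mem_range, not_lt] at hk hk'
  have : a < k ∨ b < k := by omega
  rcases this with h | h
  · simp [Nat.choose_eq_zero_of_lt h]
  · simp [Nat.choose_eq_zero_of_lt h]

private lemma Dsum_shift (m n T : ℕ) (hT : m < T) :
    Dsum m n T = 1 + ∑ k ∈ Finset.range T,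
      m.choose (k + 1) * n.choose (k + 1) * 2 ^ (k + 1) := by
  have h1 : Dsum m n (T + 1) = Dsum m n T := by
    unfold Dsum
    rw [Finset.sum_range_succ, Nat.choose_eq_zero_of_lt hT]
    simp
  have h2 : Dsum m n (T + 1) =
      (∑ k ∈ Finset.range T, m.choose (k + 1) * n.choose (k + 1) * 2 ^ (k + 1)) + 1 := by
    unfold Dsum
    rw [Finset.sum_range_succ']
    simp
  omega

private lemma Dsum_rec (m n : ℕ) :
    Dsum (m + 1) (n + 1) (m + n + 2) =
      Dsum (m + 1) n (m + n + 2) + Dsum m (n + 1) (m + n + 2) + Dsum m n (m + n + 2) := by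
  set T := m + n + 1 with hT
  have expand : ∀ a b : ℕ, Dsum a b (T + 1) =
      (∑ k ∈ Finset.range T, a.choose (k + 1) * b.choose (k + 1) * 2 ^ (k + 1)) + 1 := by
    intro a b
    unfold Dsum
    rw [Finset.sum_range_succ']
    simp
  have hTT : m + n + 2 = T + 1 := by omega
  rw [hTT, expand, expand, expand, expand]
  -- abbreviations
  have key : (∑ k ∈ Finset.range T,
        ((m + 1).choose (k + 1) * (n + 1).choose (k + 1) * 2 ^ (k + 1)
          + 2 * (m.choose (k + 1) * n.choose (k + 1) * 2 ^ (k + 1))))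
      = ∑ k ∈ Finset.range T,
        (((m + 1).choose (k + 1) * n.choose (k + 1) * 2 ^ (k + 1)
          + m.choose (k + 1) * (n + 1).choose (k + 1) * 2 ^ (k + 1)
          + m.choose (k + 1) * n.choose (k + 1) * 2 ^ (k + 1))
          + 2 * (m.choose k * n.choose k * 2 ^ k)) := by
    refine Finset.sum_congr rfl fun k _ => ?_
    rw [Nat.choose_succ_succ m k, Nat.choose_succ_succ n k, pow_succ]
    ring
  simp only [Finset.sum_add_distrib, ← Finset.mul_sum] at key
  have shift := Dsum_shift m n T (by omega)
  unfold Dsum at shift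
  omega

private lemma f_eq_Dsum (f : ℕ → ℕ → ℕ)
    (hf0 : ∀ m, f m 0 = 1) (h0f : ∀ n, f 0 n = 1)
    (hrec : ∀ m n, f (m + 1) (n + 1) = f (m + 1) n + f m (n + 1) + f m n) :
    ∀ m n, f m n = Dsum m n (m + n + 1) := by
  intro m
  induction m with
  | zero =>
    intro n
    rw [h0f]
    have := Dsum_stable 0 n (N := 1) (M := 0 + n + 1) (by simp) (by omega)
    rw [this]
    simp [Dsum]
  | succ m ih =>
    intro n
    induction n with
    | zero =>
      rw [hf0]
      have := Dsum_stable (m + 1) 0 (N := 1) (M := m + 1 + 0 + 1) (by simp) (by omega)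
      rw [this]
      simp [Dsum]
    | succ n ihn =>
      rw [hrec, ihn, ih n, ih (n + 1)]
      have e1 : Dsum (m + 1) n (m + 1 + n + 1) = Dsum (m + 1) n (m + n + 2) := by
        congr 1 <;> omega
      have e2 : Dsum m (n + 1) (m + (n + 1) + 1) = Dsum m (n + 1) (m + n + 2) := by
        congr 1 <;> omega
      have e3 : Dsum m n (m + n + 1) = Dsum m n (m + n + 2) := by
        rw [Dsum_stable m n (N := m + n + 1) (M := m + n + 2) (by omega) (by omega)]
      have e4 : Dsum (m + 1) (n + 1) (m + 1 + (n + 1) + 1) = Dsum (m + 1) (n + 1) (m + n + 2) := by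
        rw [Dsum_stable (m + 1) (n + 1) (N := m + n + 2) (M := m + 1 + (n + 1) + 1)
          (by omega) (by omega)]
      rw [e1, e2, e3, e4, Dsum_rec]

/-- closed formula for the Delannoy numbers
`f(m,n) = Σ_{k=0}^{min(m,n)} C(m,k) C(n,k) 2^k`. -/
theorem delannoy_closed_form (f : ℕ → ℕ → ℕ)
    (hf0 : ∀ m, f m 0 = 1) (h0f : ∀ n, f 0 n = 1)
    (hrec : ∀ m n, f (m + 1) (n + 1) = f (m + 1) n + f m (n + 1) + f m n) :
    ∀ m n, f m n = ∑ k ∈ Finset.range (min m n + 1),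
      m.choose k * n.choose k * 2 ^ k := by
  intro m n
  rw [f_eq_Dsum f hf0 h0f hrec m n,
    Dsum_stable m n (N := min m n + 1) (M := m + n + 1) (by omega) (by omega)]
  rfl
end

section
/- Let σ be a witness prestructure in trace form (A, G, {Tr(p)}), and for S ⊆ A define the stabilization st_S(σ) as the prestructure with trace form (A \ S, G ∪ S, {Tr(p) ∩ [q]}) where q = max ⋃_{p ∈ A \ S} Tr(p) if S ⊊ A and q = 0 if S = A. Then for disjoint S, T ⊆ A we have st_T(st_S(σ)) = st_{S ∪ T}(σ). -/
open scoped Classical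

/-- The truncation index `q` used in the stabilization of a witness prestructure
in trace form `(A, G, Tr)` modulo `S ⊆ A`:  `q = max ⋃_{p ∈ A \ S} Tr p` if
`S ⊊ A`, and `q = 0` if `S = A`. -/
noncomputable def stabQ (A S : Finset ℕ) (Tr : ℕ → Finset ℕ) : ℕ :=
  if S = A then 0 else ((A \ S).biUnion Tr).sup id

/-- The traces of the stabilization `st_S(σ)`: each trace is truncated at `q`,
i.e. intersected with `[q] = {0,…,q}`.  The stabilization of `(A,G,Tr)` modulo
`S` is the triple `(A \ S, G ∪ S, stabTr A S Tr)`. -/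
noncomputable def stabTr (A S : Finset ℕ) (Tr : ℕ → Finset ℕ) : ℕ → Finset ℕ :=
  fun p => Tr p ∩ Finset.range (stabQ A S Tr + 1)

/-- `(A,G,Tr)` is a witness prestructure in trace form: `A`, `G` disjoint,
every trace of the support contains `0` (T1), and the union of the traces of
the support is an initial segment of `ℕ` (T2). -/
def IsPre (A G : Finset ℕ) (Tr : ℕ → Finset ℕ) : Prop :=
  Disjoint A G ∧ (∀ p ∈ A ∪ G, 0 ∈ Tr p) ∧
    (∀ j k : ℕ, j ≤ k → k ∈ (A ∪ G).biUnion Tr → j ∈ (A ∪ G).biUnion Tr)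

/-- stabilization composes: for disjoint `S, T ⊆ A`,
`st_T(st_S(σ)) = st_{S∪T}(σ)` (Proposition 2.13 of the paper). -/
theorem stab_stab (A G S T : Finset ℕ) (Tr : ℕ → Finset ℕ)
    (hpre : IsPre A G Tr) (hS : S ⊆ A) (hT : T ⊆ A) (hST : Disjoint S T) :
    (A \ S) \ T = A \ (S ∪ T) ∧ (G ∪ S) ∪ T = G ∪ (S ∪ T) ∧
    ∀ p ∈ A ∪ G, stabTr (A \ S) T (stabTr A S Tr) p = stabTr A (S ∪ T) Tr p := by
  have hdisj := Finset.disjoint_left.1 hST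
  have h1 : (A \ S) \ T = A \ (S ∪ T) := by
    ext x; simp only [Finset.mem_sdiff, Finset.mem_union]; tauto
  refine ⟨h1, by ext x; simp only [Finset.mem_union]; tauto, ?_⟩
  intro p _
  by_cases hall : S ∪ T = A
  · have hTeq : T = A \ S := by
      ext x
      simp only [Finset.mem_sdiff]
      constructor
      · exact fun hx => ⟨hT hx, fun hxS => hdisj hxS hx⟩
      · rintro ⟨hxA, hxS⟩
        have hx : x ∈ S ∪ T := hall ▸ hxA
        rcases Finset.mem_union.1 hx with h | h
        · exact absurd h hxS
        · exact h
    have hq2 : stabQ (A \ S) T (stabTr A S Tr) = 0 := by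
      simp [stabQ, hTeq]
    have hq : stabQ A (S ∪ T) Tr = 0 := by simp [stabQ, hall]
    ext x
    simp only [stabTr, hq2, hq, Finset.mem_inter, Finset.mem_range]
    constructor
    · rintro ⟨⟨h, _⟩, h2⟩; exact ⟨h, h2⟩
    · rintro ⟨h, h2⟩; exact ⟨⟨h, by omega⟩, h2⟩
  · have hSA : S ≠ A := by
      rintro rfl
      exact hall (by
        ext x; simp only [Finset.mem_union]
        exact ⟨fun h => h.elim id (fun h => hT h), Or.inl⟩)
    have hq1 : stabQ A S Tr = ((A \ S).biUnion Tr).sup id := if_neg hSA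
    have hq : stabQ A (S ∪ T) Tr = ((A \ (S ∪ T)).biUnion Tr).sup id := if_neg hall
    set q1 := stabQ A S Tr with hq1def
    set q := ((A \ (S ∪ T)).biUnion Tr).sup id with hqdef
    have hqle : q ≤ q1 := by
      rw [hq1]
      apply Finset.sup_mono
      apply Finset.biUnion_subset_biUnion_of_subset_left
      intro x hx
      simp only [Finset.mem_sdiff, Finset.mem_union] at hx ⊢
      tauto
    have hTne : T ≠ A \ S := by
      intro h
      apply hall
      ext x
      simp only [Finset.mem_union, h, Finset.mem_sdiff]
      constructor
      · rintro (h | h)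
        · exact hS h
        · exact h.1
      · intro hxA
        by_cases hxS : x ∈ S
        · exact Or.inl hxS
        · exact Or.inr ⟨hxA, hxS⟩
    have hbU : ((A \ S) \ T).biUnion (stabTr A S Tr) = (A \ (S ∪ T)).biUnion Tr := by
      rw [h1]
      ext x
      simp only [Finset.mem_biUnion, stabTr, Finset.mem_inter, Finset.mem_range]
      constructor
      · rintro ⟨r, hr, hx, _⟩; exact ⟨r, hr, hx⟩
      · rintro ⟨r, hr, hx⟩
        refine ⟨r, hr, hx, ?_⟩
        have : x ≤ q := by
          rw [hqdef]
          exact Finset.le_sup (f := id) (Finset.mem_biUnion.2 ⟨r, hr, hx⟩)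
        omega
    have hq2 : stabQ (A \ S) T (stabTr A S Tr) = q := by
      rw [stabQ, if_neg hTne, hbU]
    ext x
    simp only [stabTr, hq2, hq, Finset.mem_inter, Finset.mem_range, ← hq1def, ← hqdef]
    constructor
    · rintro ⟨⟨hx, _⟩, h2⟩; exact ⟨hx, h2⟩
    · rintro ⟨hx, h2⟩; exact ⟨⟨hx, by omega⟩, h2⟩
end

section
/- Let σ be a witness structure and let S, T ⊆ A(σ) be disjoint subsets of its active set. Define the ghosting operation Γ_S(σ) := C(st_S(σ)), where st_S is stabilization modulo S and C is the canonical form. Then Γ_T(Γ_S(σ)) = Γ_{S∪T}(σ). -/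
open scoped Classical

/-- `k` is a *surviving* index of the trace-form prestructure `(A,G,Tr)`:
`k = 0`, or the column `W_k` is nonempty, i.e. some `p` of the support has
`k ∈ Tr p` without `k` being the maximum of the trace of a ghost `p`. -/
def Surv (A G : Finset ℕ) (Tr : ℕ → Finset ℕ) (k : ℕ) : Prop :=
  k = 0 ∨ ∃ p ∈ A ∪ G, k ∈ Tr p ∧ ¬(p ∈ G ∧ (Tr p).sup id = k)

/-- The order-preserving collapse of indices deleting non-surviving columns:
`collapse A G Tr j` is the number of surviving indices `< j`. -/
noncomputable def collapse (A G : Finset ℕ) (Tr : ℕ → Finset ℕ) (j : ℕ) : ℕ :=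
  ((Finset.range j).filter (Surv A G Tr)).card

/-- Traces of the canonical form `C(σ)` of a stable prestructure `(A,G,Tr)`:
indices are renumbered by the collapse map (empty `W`-columns are deleted and
their ghost sets merged into the next surviving column). -/
noncomputable def canonTr (A G : Finset ℕ) (Tr : ℕ → Finset ℕ) : ℕ → Finset ℕ :=
  fun p => (Tr p).image (collapse A G Tr)

/-- Traces of the ghosting `Γ_S(σ) = C(st_S(σ))`; the ghosting of `(A,G,Tr)` by
`S ⊆ A` is the triple `(A \ S, G ∪ S, ghostTr A G S Tr)`. -/
noncomputable def ghostTr (A G S : Finset ℕ) (Tr : ℕ → Finset ℕ) : ℕ → Finset ℕ :=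
  canonTr (A \ S) (G ∪ S) (stabTr A S Tr)

/-- `(A,G,Tr)` is a witness structure in trace form: a prestructure satisfying
(TW): every index occurring in some trace is a surviving index. -/
def IsWS (A G : Finset ℕ) (Tr : ℕ → Finset ℕ) : Prop :=
  IsPre A G Tr ∧ ∀ k ∈ (A ∪ G).biUnion Tr, Surv A G Tr k

lemma collapse_mono (A G : Finset ℕ) (Tr : ℕ → Finset ℕ) : Monotone (collapse A G Tr) := by
  intro i j hij
  apply Finset.card_le_card
  exact Finset.filter_subset_filter _ (by simpa using Finset.range_subset_range.2 hij)

lemma surv_zero (A G : Finset ℕ) (Tr : ℕ → Finset ℕ) : Surv A G Tr 0 := Or.inl rfl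

lemma collapse_zero (A G : Finset ℕ) (Tr : ℕ → Finset ℕ) : collapse A G Tr 0 = 0 := by
  simp [collapse]

lemma collapse_lt (A G : Finset ℕ) (Tr : ℕ → Finset ℕ) {i j : ℕ}
    (hs : Surv A G Tr i) (hij : i < j) :
    collapse A G Tr i < collapse A G Tr j := by
  have h1 : collapse A G Tr (i + 1) = collapse A G Tr i + 1 := by
    unfold collapse
    rw [Finset.range_add_one, Finset.filter_insert, if_pos hs,
      Finset.card_insert_of_notMem (by simp)]
  have h2 : collapse A G Tr (i + 1) ≤ collapse A G Tr j := collapse_mono A G Tr hij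
  omega

lemma collapse_surj (A G : Finset ℕ) (Tr : ℕ → Finset ℕ) {j i' : ℕ}
    (h : i' < collapse A G Tr j) :
    ∃ i, i < j ∧ Surv A G Tr i ∧ collapse A G Tr i = i' := by
  induction j with
  | zero => simp [collapse] at h
  | succ j ih =>
    by_cases hij : i' < collapse A G Tr j
    · obtain ⟨i, h1, h2, h3⟩ := ih hij
      exact ⟨i, by omega, h2, h3⟩
    · have hstep : collapse A G Tr (j + 1) =
          collapse A G Tr j + (if Surv A G Tr j then 1 else 0) := by
        unfold collapse
        rw [Finset.range_add_one, Finset.filter_insert]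
        split
        · rw [Finset.card_insert_of_notMem (by simp)]
        · simp
      rw [hstep] at h
      split at h
      · exact ⟨j, by omega, ‹_›, by omega⟩
      · omega

lemma sup_image_monotone {s : Finset ℕ} (hs : s.Nonempty) {f : ℕ → ℕ} (hf : Monotone f) :
    (s.image f).sup id = f (s.sup id) := by
  obtain ⟨b, hb, hbe⟩ := Finset.exists_mem_eq_sup s hs id
  apply le_antisymm
  · apply Finset.sup_le
    rintro x hx
    obtain ⟨a, ha, rfl⟩ := Finset.mem_image.1 hx
    exact hf (Finset.le_sup (f := id) ha)
  · rw [hbe]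
    exact Finset.le_sup (f := id) (Finset.mem_image_of_mem f hb)

/-- the ghosting operation `Γ_S(σ) = C(st_S(σ))` composes: for a
witness structure `σ = (A,G,Tr)` and disjoint `S, T ⊆ A(σ)`,
`Γ_T(Γ_S(σ)) = Γ_{S∪T}(σ)` (Proposition 2.20 of the paper). -/
theorem ghost_ghost (A G S T : Finset ℕ) (Tr : ℕ → Finset ℕ)
    (hws : IsWS A G Tr) (hS : S ⊆ A) (hT : T ⊆ A) (hST : Disjoint S T) :
    (A \ S) \ T = A \ (S ∪ T) ∧ (G ∪ S) ∪ T = G ∪ (S ∪ T) ∧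
    ∀ p ∈ A ∪ G,
      ghostTr (A \ S) (G ∪ S) T (ghostTr A G S Tr) p = ghostTr A G (S ∪ T) Tr p := by
  obtain ⟨⟨hAG, hT1, _⟩, _⟩ := hws
  have hsd : (A \ S) \ T = A \ (S ∪ T) := by
    ext x; simp [and_assoc]
  have hun : (G ∪ S) ∪ T = G ∪ (S ∪ T) := Finset.union_assoc G S T
  refine ⟨hsd, hun, ?_⟩
  intro p hp
  -- supports coincide
  have hAGS : (A \ S) ∪ (G ∪ S) = A ∪ G := by
    ext x
    have h1 : x ∈ S → x ∈ A := fun h => hS h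
    simp only [Finset.mem_union, Finset.mem_sdiff]
    tauto
  have hBH : (A \ (S ∪ T)) ∪ (G ∪ (S ∪ T)) = A ∪ G := by
    ext x
    have h1 : x ∈ S → x ∈ A := fun h => hS h
    have h2 : x ∈ T → x ∈ A := fun h => hT h
    simp only [Finset.mem_union, Finset.mem_sdiff]
    tauto
  -- abbreviations
  set q1 := stabQ A S Tr with hq1def
  set q := stabQ A (S ∪ T) Tr with hqdef
  set Tr1 := stabTr A S Tr with hTr1def
  set Tr3 := stabTr A (S ∪ T) Tr with hTr3def
  set c1 := collapse (A \ S) (G ∪ S) Tr1 with hc1def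
  have hc10 : c1 0 = 0 := collapse_zero _ _ _
  set c3 := collapse (A \ (S ∪ T)) (G ∪ (S ∪ T)) Tr3 with hc3def
  set Tr' := ghostTr A G S Tr with hTr'def
  have hTr'eq : ∀ r, Tr' r = (Tr1 r).image c1 := fun r => rfl
  -- goal rewriting: unfold outer ghostTr and rewrite its sets
  show canonTr ((A \ S) \ T) ((G ∪ S) ∪ T) (stabTr (A \ S) T Tr') p
      = canonTr (A \ (S ∪ T)) (G ∪ (S ∪ T)) Tr3 p
  rw [hsd, hun]
  by_cases hSTA : S ∪ T = A
  · -- degenerate case : everything is ghosted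
    have hTAS : T = A \ S := by
      ext x
      have h1 : x ∈ T → x ∈ A := fun h => hT h
      have h2 : x ∈ S → x ∉ T := fun hs ht => Finset.disjoint_left.1 hST hs ht
      have h3 : x ∈ A → x ∈ S ∨ x ∈ T := fun h => by
        have : x ∈ S ∪ T := by rw [hSTA]; exact h
        exact Finset.mem_union.1 this
      simp only [Finset.mem_sdiff]
      tauto
    have hq0 : q = 0 := by rw [hqdef, stabQ, if_pos hSTA]
    have h0p : (0 : ℕ) ∈ Tr p := hT1 p hp
    have hTr3p : Tr3 p = {0} := by
      rw [hTr3def]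
      ext x
      simp only [stabTr, Finset.mem_inter, Finset.mem_range, hq0, Finset.mem_singleton]
      constructor
      · rintro ⟨_, hx⟩; omega
      · rintro rfl; exact ⟨h0p, by omega⟩
    have hq2 : stabQ (A \ S) T Tr' = 0 := by rw [stabQ, if_pos hTAS]
    have h0Tr' : (0 : ℕ) ∈ Tr' p := by
      rw [hTr'eq]
      have h01 : (0 : ℕ) ∈ Tr1 p := by
        rw [hTr1def]
        exact Finset.mem_inter.2 ⟨h0p, Finset.mem_range.2 (by omega)⟩
      have := Finset.mem_image_of_mem c1 h01
      rwa [hc10] at this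
    have hTr2p : stabTr (A \ S) T Tr' p = {0} := by
      ext x
      simp only [stabTr, Finset.mem_inter, Finset.mem_range, hq2, Finset.mem_singleton]
      constructor
      · rintro ⟨_, hx⟩; omega
      · rintro rfl; exact ⟨h0Tr', by omega⟩
    rw [canonTr, canonTr, hTr2p, hTr3p]
    simp only [Finset.image_singleton, hc3def, collapse_zero]
  -- main case
  have hSA : S ≠ A := by
    intro h
    apply hSTA
    rw [h]
    exact Finset.union_eq_left.2 hT
  have hTAS : T ≠ A \ S := by
    intro h
    apply hSTA
    rw [h]
    ext x
    have h1 : x ∈ S → x ∈ A := fun hx => hS hx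
    simp only [Finset.mem_union, Finset.mem_sdiff]
    tauto
  have hq1 : q1 = ((A \ S).biUnion Tr).sup id := by rw [hq1def, stabQ, if_neg hSA]
  have hq : q = ((A \ (S ∪ T)).biUnion Tr).sup id := by rw [hqdef, stabQ, if_neg hSTA]
  have hBsub : A \ (S ∪ T) ⊆ A \ S :=
    Finset.sdiff_subset_sdiff (le_refl A) Finset.subset_union_left
  -- bounds on traces
  have htrb1 : ∀ r ∈ A \ S, ∀ k ∈ Tr r, k ≤ q1 := by
    intro r hr k hk
    rw [hq1]
    exact Finset.le_sup (f := id) (Finset.mem_biUnion.2 ⟨r, hr, hk⟩)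
  have htrb : ∀ r ∈ A \ (S ∪ T), ∀ k ∈ Tr r, k ≤ q := by
    intro r hr k hk
    rw [hq]
    exact Finset.le_sup (f := id) (Finset.mem_biUnion.2 ⟨r, hr, hk⟩)
  have hqq1 : q ≤ q1 := by
    rw [hq, hq1]
    exact Finset.sup_mono (Finset.biUnion_subset_biUnion_of_subset_left Tr hBsub)
  have hTr1mem : ∀ r k, k ∈ Tr1 r ↔ k ∈ Tr r ∧ k ≤ q1 := by
    intro r k
    rw [hTr1def]
    simp only [stabTr, Finset.mem_inter, Finset.mem_range, ← hq1def]
    constructor <;> rintro ⟨h1, h2⟩ <;> exact ⟨h1, by omega⟩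
  have hTr3mem : ∀ r k, k ∈ Tr3 r ↔ k ∈ Tr r ∧ k ≤ q := by
    intro r k
    rw [hTr3def]
    simp only [stabTr, Finset.mem_inter, Finset.mem_range, ← hqdef]
    constructor <;> rintro ⟨h1, h2⟩ <;> exact ⟨h1, by omega⟩
  have hTr1eq : ∀ r ∈ A \ S, Tr1 r = Tr r := by
    intro r hr
    ext k
    rw [hTr1mem]
    exact ⟨fun h => h.1, fun h => ⟨h, htrb1 r hr k h⟩⟩
  have hTr3sub : ∀ r, Tr3 r ⊆ Tr1 r := by
    intro r k hk
    rw [hTr3mem] at hk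
    rw [hTr1mem]
    exact ⟨hk.1, le_trans hk.2 hqq1⟩
  -- the set A \ (S ∪ T) is nonempty
  have hBne : (A \ (S ∪ T)).Nonempty := by
    rcases Finset.exists_of_ssubset (lt_of_le_of_ne (Finset.union_subset hS hT) hSTA)
      with ⟨x, hx1, hx2⟩
    exact ⟨x, Finset.mem_sdiff.2 ⟨hx1, hx2⟩⟩
  have hbiUne : ((A \ (S ∪ T)).biUnion Tr).Nonempty := by
    obtain ⟨x, hx⟩ := hBne
    refine ⟨0, Finset.mem_biUnion.2 ⟨x, hx, ?_⟩⟩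
    apply hT1
    exact Finset.mem_union.2 (Or.inl (Finset.mem_sdiff.1 hx).1)
  -- q is attained
  obtain ⟨b, hbmem, hbeq⟩ := Finset.exists_mem_eq_sup _ hbiUne (id : ℕ → ℕ)
  obtain ⟨p0, hp0, hqp0⟩ := Finset.mem_biUnion.1 hbmem
  have hbq : b = q := by rw [hq, hbeq]; rfl
  rw [hbq] at hqp0
  -- q is a surviving index of st_S σ
  have hp0AS : p0 ∈ A \ S := hBsub hp0
  have hp0GS : p0 ∉ G ∪ S := by
    rcases Finset.mem_sdiff.1 hp0 with ⟨hA', hST'⟩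
    intro h
    rcases Finset.mem_union.1 h with h | h
    · exact (Finset.disjoint_left.1 hAG hA') h
    · exact hST' (Finset.mem_union.2 (Or.inl h))
  have hSurv1q : Surv (A \ S) (G ∪ S) Tr1 q := by
    refine Or.inr ⟨p0, Finset.mem_union.2 (Or.inl hp0AS), ?_, ?_⟩
    · rw [hTr1eq p0 hp0AS]; exact hqp0
    · rintro ⟨h, _⟩; exact hp0GS h
  have hc1mono : Monotone c1 := collapse_mono _ _ _
  have hc1strict : ∀ {i j : ℕ}, Surv (A \ S) (G ∪ S) Tr1 i → i < j → c1 i < c1 j :=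
    fun h hij => collapse_lt _ _ _ h hij
  -- the second truncation index equals c1 q
  have hq2 : stabQ (A \ S) T Tr' = c1 q := by
    rw [stabQ, if_neg hTAS, hsd]
    have : (A \ (S ∪ T)).biUnion Tr' = ((A \ (S ∪ T)).biUnion Tr).image c1 := by
      rw [Finset.biUnion_image]
      apply Finset.biUnion_congr rfl
      intro r hr
      rw [hTr'eq, hTr1eq r (hBsub hr)]
    rw [this, sup_image_monotone hbiUne hc1mono, ← hq]
  -- traces of second stabilization are c1-images of Tr3
  have hTr2 : ∀ r ∈ A ∪ G, stabTr (A \ S) T Tr' r = (Tr3 r).image c1 := by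
    intro r _
    rw [stabTr, hq2, hTr'eq]
    ext x
    simp only [Finset.mem_inter, Finset.mem_range, Finset.mem_image]
    constructor
    · rintro ⟨⟨k, hk, rfl⟩, hxle⟩
      refine ⟨k, ?_, rfl⟩
      rw [hTr3mem]
      rw [hTr1mem] at hk
      refine ⟨hk.1, ?_⟩
      by_contra hkq
      have := hc1strict hSurv1q (show q < k by omega)
      omega
    · rintro ⟨k, hk, rfl⟩
      rw [hTr3mem] at hk
      refine ⟨⟨k, ?_, rfl⟩, ?_⟩
      · rw [hTr1mem]; exact ⟨hk.1, le_trans hk.2 hqq1⟩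
      · have := hc1mono hk.2; omega
  have hTr3ne : ∀ r ∈ A ∪ G, (Tr3 r).Nonempty := by
    intro r hr
    exact ⟨0, (hTr3mem r 0).2 ⟨hT1 r hr, by omega⟩⟩
  have hsupTr2 : ∀ r ∈ A ∪ G, (stabTr (A \ S) T Tr' r).sup id = c1 ((Tr3 r).sup id) := by
    intro r hr
    rw [hTr2 r hr, sup_image_monotone (hTr3ne r hr) hc1mono]
  -- Claim A
  have claimA : ∀ i ≤ q, (Surv (A \ (S ∪ T)) (G ∪ (S ∪ T)) Tr3 i ↔
      Surv (A \ S) (G ∪ S) Tr1 i ∧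
      Surv (A \ (S ∪ T)) (G ∪ (S ∪ T)) (stabTr (A \ S) T Tr') (c1 i)) := by
    intro i hiq
    rcases Nat.eq_zero_or_pos i with rfl | hipos
    · rw [hc10]
      exact ⟨fun _ => ⟨surv_zero _ _ _, surv_zero _ _ _⟩, fun _ => surv_zero _ _ _⟩
    constructor
    · rintro (h0 | ⟨r, hrmem, hrTr, hrneg⟩)
      · omega
      have hrmem' : r ∈ A ∪ G := hBH ▸ hrmem
      have hiTr : i ∈ Tr r := ((hTr3mem r i).1 hrTr).1
      have hSurv1i : Surv (A \ S) (G ∪ S) Tr1 i := by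
        refine Or.inr ⟨r, hAGS ▸ hrmem', ?_, ?_⟩
        · rw [hTr1mem]; exact ⟨hiTr, le_trans hiq hqq1⟩
        · rintro ⟨hrG, hrsup⟩
          apply hrneg
          constructor
          · rcases Finset.mem_union.1 hrG with h | h
            · exact Finset.mem_union.2 (Or.inl h)
            · exact Finset.mem_union.2 (Or.inr (Finset.mem_union.2 (Or.inl h)))
          · have h1 : (Tr3 r).sup id ≤ (Tr1 r).sup id := Finset.sup_mono (hTr3sub r)
            have h2 : i ≤ (Tr3 r).sup id := Finset.le_sup (f := id) hrTr
            rw [hrsup] at h1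
            omega
      refine ⟨hSurv1i, Or.inr ⟨r, hrmem, ?_, ?_⟩⟩
      · rw [hTr2 r hrmem']
        exact Finset.mem_image_of_mem c1 hrTr
      · rintro ⟨hrH, hrsup⟩
        rw [hsupTr2 r hrmem'] at hrsup
        have h2 : i ≤ (Tr3 r).sup id := Finset.le_sup (f := id) hrTr
        rcases lt_or_eq_of_le h2 with h | h
        · have := hc1strict hSurv1i h
          omega
        · exact hrneg ⟨hrH, h.symm⟩
    · rintro ⟨hSurv1i, h0 | ⟨r, hrmem, hrTr, hrneg⟩⟩
      · have := hc1strict (surv_zero (A \ S) (G ∪ S) Tr1) hipos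
        rw [hc10] at this
        omega
      have hrmem' : r ∈ A ∪ G := hBH ▸ hrmem
      rw [hTr2 r hrmem'] at hrTr
      obtain ⟨m, hmTr3, hmc⟩ := Finset.mem_image.1 hrTr
      -- m = i
      have hmi : m = i := by
        by_contra hne
        rcases Nat.lt_or_ge m i with hmlt | hmge
        · -- m < i, show m is surviving for st_S σ
          have hmTr : m ∈ Tr r := ((hTr3mem r m).1 hmTr3).1
          have hmq : m ≤ q := ((hTr3mem r m).1 hmTr3).2
          have hmTr1 : m ∈ Tr1 r := (hTr1mem r m).2 ⟨hmTr, le_trans hmq hqq1⟩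
          have hSurv1m : Surv (A \ S) (G ∪ S) Tr1 m := by
            refine Or.inr ⟨r, hAGS ▸ hrmem', hmTr1, ?_⟩
            rintro ⟨hrGS, hrsup⟩
            have hrH : r ∈ G ∪ (S ∪ T) := by
              rcases Finset.mem_union.1 hrGS with h | h
              · exact Finset.mem_union.2 (Or.inl h)
              · exact Finset.mem_union.2 (Or.inr (Finset.mem_union.2 (Or.inl h)))
            have hsupne : (stabTr (A \ S) T Tr' r).sup id ≠ c1 i := fun h => hrneg ⟨hrH, h⟩
            rw [hsupTr2 r hrmem'] at hsupne
            have hM : m ≤ (Tr3 r).sup id := Finset.le_sup (f := id) hmTr3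
            rcases lt_or_eq_of_le hM with h | h
            · -- sup Tr3 r > m, so sup Tr1 r > m, contradiction with hrsup
              have h1 : (Tr3 r).sup id ≤ (Tr1 r).sup id := Finset.sup_mono (hTr3sub r)
              omega
            · rw [← h, hmc] at hsupne
              exact hsupne rfl
          have := hc1strict hSurv1m hmlt
          omega
        · have hmgt : i < m := by omega
          have := hc1strict hSurv1i hmgt
          omega
      subst hmi
      refine Or.inr ⟨r, hrmem, hmTr3, ?_⟩
      rintro ⟨hrH, hrsup⟩
      apply hrneg
      refine ⟨hrH, ?_⟩
      rw [hsupTr2 r hrmem', hrsup]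
  -- counting: c2 ∘ c1 = c3 below q
  have hcount : ∀ j ≤ q,
      collapse (A \ (S ∪ T)) (G ∪ (S ∪ T)) (stabTr (A \ S) T Tr') (c1 j) = c3 j := by
    intro j hjq
    set Tr2 := stabTr (A \ S) T Tr' with hTr2def
    have hset : (Finset.range (c1 j)).filter (Surv (A \ (S ∪ T)) (G ∪ (S ∪ T)) Tr2)
        = ((Finset.range j).filter (Surv (A \ (S ∪ T)) (G ∪ (S ∪ T)) Tr3)).image c1 := by
      ext i'
      simp only [Finset.mem_filter, Finset.mem_range, Finset.mem_image]
      constructor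
      · rintro ⟨hlt, hs2⟩
        obtain ⟨i, hij, hs1, hci⟩ := collapse_surj _ _ _ hlt
        have hci' : c1 i = i' := hci
        refine ⟨i, ⟨hij, ?_⟩, hci'⟩
        refine (claimA i (by omega)).2 ⟨hs1, ?_⟩
        rw [hci']
        exact hs2
      · rintro ⟨i, ⟨hij, hs3⟩, rfl⟩
        have := (claimA i (by omega)).1 hs3
        exact ⟨hc1strict this.1 hij, this.2⟩
    rw [hc3def, collapse, collapse, hset, Finset.card_image_of_injOn]
    intro x hx y hy hxy
    simp only [Finset.coe_filter, Set.mem_setOf_eq, Finset.mem_range] at hx hy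
    have hx1 := ((claimA x (le_trans (le_of_lt hx.1) hjq)).1 hx.2).1
    have hy1 := ((claimA y (le_trans (le_of_lt hy.1) hjq)).1 hy.2).1
    rcases lt_trichotomy x y with h | h | h
    · exact absurd hxy (ne_of_lt (hc1strict hx1 h))
    · exact h
    · exact absurd hxy.symm (ne_of_lt (hc1strict hy1 h))
  -- conclusion
  rw [canonTr, canonTr, hTr2 p hp, Finset.image_image]
  apply Finset.image_congr
  intro j hj
  simp only [Finset.mem_coe] at hj
  exact hcount j ((hTr3mem p j).1 hj).2
end

section
/- There is a bijection between the simplices of the standard chromatic subdivision χ(Δ^n) — pairs ((B_1,…,B_t),(C_1,…,C_t)) where B_1,…,B_t are pairwise disjoint nonempty subsets of {0,…,n} and ∅ ≠ C_i ⊆ B_i for all i — and the witness structures ((W_0,G_0),…,(W_t,G_t)) satisfying W_0 ∪ G_0 = {0,…,n}, W_0 = W_1 ∪ ⋯ ∪ W_t ∪ G_1 ∪ ⋯ ∪ G_t, and W_1,…,W_t,G_1,…,G_t pairwise disjoint. The bijection sends ((B_i),(C_i)) to the structure with W_0 = B_1∪⋯∪B_t, G_0 = {0,…,n} \ W_0,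 W_i = C_i, G_i = B_i \ C_i, with inverse σ ↦ ((W_1∪G_1,…,W_t∪G_t),(W_1,…,W_t)). Under this bijection, the dimension |C_1|+⋯+|C_t|−1 equals dim σ = |A(σ)|−1. -/
open scoped Classical

/-- The trace of `p` in the sequence-form witness structure
`((W_0,G_0),…,(W_t,G_t))`: the set of indices `i ≤ t` with `p ∈ W_i ∪ G_i`. -/
def SeqTrace (t : ℕ) (W G : ℕ → Finset ℕ) (p : ℕ) : Finset ℕ :=
  (Finset.range (t + 1)).filter (fun i => p ∈ W i ∪ G i)

/-- `((W_0,G_0),…,(W_t,G_t))` is a witness structure: conditions (P1)–(P3)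
together with (W): all `W_i`, `1 ≤ i ≤ t`, nonempty. -/
def IsSeqWS (t : ℕ) (W G : ℕ → Finset ℕ) : Prop :=
  (∀ i, 1 ≤ i → i ≤ t → W i ⊆ W 0 ∧ G i ⊆ W 0) ∧
  (∀ i j, i < j → j ≤ t → Disjoint (G i) (G j)) ∧
  (∀ i j, i ≤ j → j ≤ t → Disjoint (G i) (W j)) ∧
  (∀ i, 1 ≤ i → i ≤ t → (W i).Nonempty)

/-- The witness structure `((W_0,G_0),…,(W_t,G_t))` indexes a simplex of the
immediate snapshot complex `P(r̄)` for `r̄ = (r 0, …, r n)`:  its support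
`W_0 ∪ G_0` is `{0,…,n}`, active elements `p` have `|Tr(p)| = r p + 1`, and
ghost elements have `|Tr(p)| ≤ r p + 1`. -/
def IsSeqSimplex (r : ℕ → ℕ) (n t : ℕ) (W G : ℕ → Finset ℕ) : Prop :=
  IsSeqWS t W G ∧ W 0 ∪ G 0 = Finset.range (n + 1) ∧
  (∀ p ∈ (W 0 ∪ G 0) \ (Finset.range (t + 1)).biUnion G,
    (SeqTrace t W G p).card = r p + 1) ∧
  (∀ p ∈ (Finset.range (t + 1)).biUnion G,
    (SeqTrace t W G p).card ≤ r p + 1)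


/-- A simplex of the standard chromatic subdivision `χ(Δⁿ)`: a pair of tuples
`((B_1,…,B_t),(C_1,…,C_t))` with `B_1,…,B_t` pairwise disjoint nonempty subsets
of `{0,…,n}` and `∅ ≠ C_i ⊆ B_i`; indices outside `{1,…,t}` are normalized to
carry empty sets. -/
structure ChromSimp (n : ℕ) where
  t : ℕ
  B : ℕ → Finset ℕ
  C : ℕ → Finset ℕ
  hB : ∀ i, 1 ≤ i → i ≤ t → (B i).Nonempty ∧ B i ⊆ Finset.range (n + 1)
  hBdisj : ∀ i j, 1 ≤ i → i < j → j ≤ t → Disjoint (B i) (B j)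
  hC : ∀ i, 1 ≤ i → i ≤ t → (C i).Nonempty ∧ C i ⊆ B i
  hout : ∀ i, i = 0 ∨ t < i → B i = ∅ ∧ C i = ∅

/-- A simplex of the immediate snapshot complex `P_n = P(1,…,1)` (n+1 ones), in
its combinatorial description: a witness structure `((W_0,G_0),…,(W_t,G_t))`
with `W_0 ∪ G_0 = {0,…,n}`, `W_0 = W_1 ∪ ⋯ ∪ W_t ∪ G_1 ∪ ⋯ ∪ G_t`, and
`W_1,…,W_t,G_1,…,G_t` pairwise disjoint; columns beyond `t` are normalized to
be empty. -/
structure PnSimp (n : ℕ) where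
  t : ℕ
  W : ℕ → Finset ℕ
  Gs : ℕ → Finset ℕ
  hws : IsSeqWS t W Gs
  h1 : W 0 ∪ Gs 0 = Finset.range (n + 1)
  h2 : W 0 = (Finset.Icc 1 t).biUnion W ∪ (Finset.Icc 1 t).biUnion Gs
  h3 : ∀ i j, 1 ≤ i → i ≤ t → 1 ≤ j → j ≤ t → i ≠ j →
    Disjoint (W i) (W j) ∧ Disjoint (Gs i) (Gs j) ∧ Disjoint (W i) (Gs j)
  h3' : ∀ i, 1 ≤ i → i ≤ t → Disjoint (W i) (Gs i)
  hout : ∀ i, t < i → W i = ∅ ∧ Gs i = ∅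

namespace ChromIso
open Finset

variable {n : ℕ}

lemma Csub (τ : ChromSimp n) (i : ℕ) : τ.C i ⊆ τ.B i := by
  rcases Nat.eq_zero_or_pos i with h0 | h1
  · simp [(τ.hout i (Or.inl h0)).2]
  rcases le_or_gt i τ.t with hi | hi
  · exact (τ.hC i h1 hi).2
  · simp [(τ.hout i (Or.inr hi)).2]

lemma Bdisj (τ : ChromSimp n) : ∀ i j, i ≠ j → Disjoint (τ.B i) (τ.B j) := by
  have h : ∀ i j, i < j → Disjoint (τ.B i) (τ.B j) := by
    intro i j hij
    rcases Nat.eq_zero_or_pos i with h0 | h1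
    · simp [(τ.hout i (Or.inl h0)).1]
    rcases le_or_gt j τ.t with hj | hj
    · exact τ.hBdisj i j h1 hij hj
    · simp [(τ.hout j (Or.inr hj)).1]
  intro i j hij
  rcases hij.lt_or_gt with hlt | hlt
  · exact h _ _ hlt
  · exact (h _ _ hlt).symm

def fwdW (τ : ChromSimp n) (i : ℕ) : Finset ℕ :=
  if i = 0 then (Finset.Icc 1 τ.t).biUnion τ.B else τ.C i

def fwdG (τ : ChromSimp n) (i : ℕ) : Finset ℕ :=
  if i = 0 then Finset.range (n + 1) \ (Finset.Icc 1 τ.t).biUnion τ.B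
  else τ.B i \ τ.C i

lemma fwdW_zero (τ : ChromSimp n) : fwdW τ 0 = (Finset.Icc 1 τ.t).biUnion τ.B := rfl

lemma fwdW_pos (τ : ChromSimp n) {i : ℕ} (h : i ≠ 0) : fwdW τ i = τ.C i := if_neg h

lemma fwdG_zero (τ : ChromSimp n) :
    fwdG τ 0 = Finset.range (n + 1) \ (Finset.Icc 1 τ.t).biUnion τ.B := rfl

lemma fwdG_pos (τ : ChromSimp n) {i : ℕ} (h : i ≠ 0) : fwdG τ i = τ.B i \ τ.C i :=
  if_neg h

/-- forward map -/
def fwd (τ : ChromSimp n) : PnSimp n where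
  t := τ.t
  W := fwdW τ
  Gs := fwdG τ
  hws := by
    refine ⟨?_, ?_, ?_, ?_⟩
    · intro i h1 hi
      have hi0 : i ≠ 0 := by omega
      have hmem : i ∈ Finset.Icc 1 τ.t := Finset.mem_Icc.2 ⟨h1, hi⟩
      rw [fwdW_pos τ hi0, fwdG_pos τ hi0, fwdW_zero]
      exact ⟨(Csub τ i).trans (Finset.subset_biUnion_of_mem τ.B hmem),
        Finset.sdiff_subset.trans (Finset.subset_biUnion_of_mem τ.B hmem)⟩
    · intro i j hij hj
      have hj0 : j ≠ 0 := by omega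
      rcases Nat.eq_zero_or_pos i with h0 | h1
      · subst h0
        rw [fwdG_zero, fwdG_pos τ hj0]
        have hmem : j ∈ Finset.Icc 1 τ.t := Finset.mem_Icc.2 ⟨by omega, hj⟩
        exact Finset.sdiff_disjoint.mono_right
          (Finset.sdiff_subset.trans (Finset.subset_biUnion_of_mem τ.B hmem))
      · have hi0 : i ≠ 0 := by omega
        rw [fwdG_pos τ hi0, fwdG_pos τ hj0]
        exact (Bdisj τ i j (by omega)).mono Finset.sdiff_subset Finset.sdiff_subset
    · intro i j hij hj
      rcases Nat.eq_zero_or_pos i with h0 | h1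
      · subst h0
        rw [fwdG_zero]
        rcases Nat.eq_zero_or_pos j with hj0 | hj1
        · subst hj0; rw [fwdW_zero]; exact Finset.sdiff_disjoint
        · have hj0' : j ≠ 0 := by omega
          rw [fwdW_pos τ hj0']
          have hmem : j ∈ Finset.Icc 1 τ.t := Finset.mem_Icc.2 ⟨hj1, hj⟩
          exact Finset.sdiff_disjoint.mono_right
            ((Csub τ j).trans (Finset.subset_biUnion_of_mem τ.B hmem))
      · have hi0 : i ≠ 0 := by omega
        have hj0 : j ≠ 0 := by omega
        rw [fwdG_pos τ hi0, fwdW_pos τ hj0]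
        rcases eq_or_ne i j with rfl | hne
        · exact Finset.sdiff_disjoint
        · exact (Bdisj τ i j hne).mono Finset.sdiff_subset (Csub τ j)
    · intro i h1 hi
      have hi0 : i ≠ 0 := by omega
      rw [fwdW_pos τ hi0]
      exact (τ.hC i h1 hi).1
  h1 := by
    rw [fwdW_zero, fwdG_zero, Finset.union_sdiff_of_subset]
    intro x hx
    rw [Finset.mem_biUnion] at hx
    obtain ⟨i, hi, hxi⟩ := hx
    rw [Finset.mem_Icc] at hi
    exact (τ.hB i hi.1 hi.2).2 hxi
  h2 := by
    rw [fwdW_zero]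
    ext x
    simp only [Finset.mem_union, Finset.mem_biUnion]
    constructor
    · rintro ⟨i, hi, hx⟩
      have hi0 : i ≠ 0 := by rw [Finset.mem_Icc] at hi; omega
      by_cases hc : x ∈ τ.C i
      · exact Or.inl ⟨i, hi, by rw [fwdW_pos τ hi0]; exact hc⟩
      · exact Or.inr ⟨i, hi, by rw [fwdG_pos τ hi0]; exact Finset.mem_sdiff.2 ⟨hx, hc⟩⟩
    · rintro (⟨i, hi, hx⟩ | ⟨i, hi, hx⟩) <;>
        (have hi0 : i ≠ 0 := by rw [Finset.mem_Icc] at hi; omega)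
      · rw [fwdW_pos τ hi0] at hx
        exact ⟨i, hi, Csub τ i hx⟩
      · rw [fwdG_pos τ hi0] at hx
        exact ⟨i, hi, Finset.sdiff_subset hx⟩
  h3 := by
    intro i j hi1 hit hj1 hjt hne
    have hi0 : i ≠ 0 := by omega
    have hj0 : j ≠ 0 := by omega
    rw [fwdW_pos τ hi0, fwdW_pos τ hj0, fwdG_pos τ hi0, fwdG_pos τ hj0]
    have hd := Bdisj τ i j hne
    exact ⟨hd.mono (Csub τ i) (Csub τ j),
      hd.mono Finset.sdiff_subset Finset.sdiff_subset,
      hd.mono (Csub τ i) Finset.sdiff_subset⟩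
  h3' := by
    intro i hi1 hit
    have hi0 : i ≠ 0 := by omega
    rw [fwdW_pos τ hi0, fwdG_pos τ hi0]
    exact Finset.disjoint_sdiff
  hout := by
    intro i hi
    have hi0 : i ≠ 0 := by omega
    have h := τ.hout i (Or.inr hi)
    rw [fwdW_pos τ hi0, fwdG_pos τ hi0, h.1, h.2]
    simp

def bwdB (σ : PnSimp n) (i : ℕ) : Finset ℕ :=
  if i = 0 then ∅ else σ.W i ∪ σ.Gs i

def bwdC (σ : PnSimp n) (i : ℕ) : Finset ℕ :=
  if i = 0 then ∅ else σ.W i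

lemma bwdB_pos (σ : PnSimp n) {i : ℕ} (h : i ≠ 0) : bwdB σ i = σ.W i ∪ σ.Gs i :=
  if_neg h

lemma bwdC_pos (σ : PnSimp n) {i : ℕ} (h : i ≠ 0) : bwdC σ i = σ.W i := if_neg h

/-- backward map -/
def bwd (σ : PnSimp n) : ChromSimp n where
  t := σ.t
  B := bwdB σ
  C := bwdC σ
  hB := by
    intro i h1 hi
    have hi0 : i ≠ 0 := by omega
    rw [bwdB_pos σ hi0]
    obtain ⟨hsub, h12, h13, hne⟩ := σ.hws
    have hW0 : σ.W 0 ⊆ Finset.range (n + 1) := σ.h1 ▸ Finset.subset_union_left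
    refine ⟨(hne i h1 hi).mono Finset.subset_union_left, ?_⟩
    exact Finset.union_subset ((hsub i h1 hi).1.trans hW0) ((hsub i h1 hi).2.trans hW0)
  hBdisj := by
    intro i j h1 hij hj
    have hi0 : i ≠ 0 := by omega
    have hj0 : j ≠ 0 := by omega
    rw [bwdB_pos σ hi0, bwdB_pos σ hj0]
    have h := σ.h3 i j h1 (by omega) (by omega) hj (by omega)
    have h' := σ.h3 j i (by omega) hj h1 (by omega) (by omega)
    rw [Finset.disjoint_union_left, Finset.disjoint_union_right,
      Finset.disjoint_union_right]
    exact ⟨⟨h.1, h.2.2⟩, ⟨h'.2.2.symm, h.2.1⟩⟩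
  hC := by
    intro i h1 hi
    have hi0 : i ≠ 0 := by omega
    rw [bwdB_pos σ hi0, bwdC_pos σ hi0]
    exact ⟨σ.hws.2.2.2 i h1 hi, Finset.subset_union_left⟩
  hout := by
    intro i hi
    rcases hi with rfl | hi
    · simp [bwdB, bwdC]
    · have hi0 : i ≠ 0 := by omega
      have h := σ.hout i hi
      rw [bwdB_pos σ hi0, bwdC_pos σ hi0, h.1, h.2]
      simp

lemma ChromSimp.ext' {σ τ : ChromSimp n} (ht : σ.t = τ.t) (hB : σ.B = τ.B)
    (hC : σ.C = τ.C) : σ = τ := by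
  cases σ; cases τ; simp_all

lemma PnSimp.ext' {σ τ : PnSimp n} (ht : σ.t = τ.t) (hW : σ.W = τ.W)
    (hG : σ.Gs = τ.Gs) : σ = τ := by
  cases σ; cases τ; simp_all

lemma bwd_fwd (τ : ChromSimp n) : bwd (fwd τ) = τ := by
  refine ChromSimp.ext' (by rfl) ?_ ?_ <;> funext i <;>
    rcases Nat.eq_zero_or_pos i with h0 | h1
  · subst h0
    show bwdB (fwd τ) 0 = τ.B 0
    rw [(τ.hout 0 (Or.inl rfl)).1]; rfl
  · have hi0 : i ≠ 0 := by omega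
    show bwdB (fwd τ) i = τ.B i
    rw [bwdB_pos _ hi0]
    show fwdW τ i ∪ fwdG τ i = τ.B i
    rw [fwdW_pos τ hi0, fwdG_pos τ hi0, Finset.union_sdiff_of_subset (Csub τ i)]
  · subst h0
    show bwdC (fwd τ) 0 = τ.C 0
    rw [(τ.hout 0 (Or.inl rfl)).2]; rfl
  · have hi0 : i ≠ 0 := by omega
    show bwdC (fwd τ) i = τ.C i
    rw [bwdC_pos _ hi0]
    exact fwdW_pos τ hi0

lemma biUnion_bwdB (σ : PnSimp n) :
    (Finset.Icc 1 σ.t).biUnion (bwdB σ) = σ.W 0 := by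
  rw [σ.h2]
  ext x
  simp only [Finset.mem_union, Finset.mem_biUnion]
  constructor
  · rintro ⟨j, hj, hx⟩
    have hj0 : j ≠ 0 := by rw [Finset.mem_Icc] at hj; omega
    rw [bwdB_pos σ hj0, Finset.mem_union] at hx
    rcases hx with hx | hx
    · exact Or.inl ⟨j, hj, hx⟩
    · exact Or.inr ⟨j, hj, hx⟩
  · rintro (⟨j, hj, hx⟩ | ⟨j, hj, hx⟩) <;>
      (have hj0 : j ≠ 0 := by rw [Finset.mem_Icc] at hj; omega) <;>
      exact ⟨j, hj, by rw [bwdB_pos σ hj0, Finset.mem_union]; tauto⟩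

lemma fwd_bwd (σ : PnSimp n) : fwd (bwd σ) = σ := by
  have hGW : ∀ i j, i ≤ j → j ≤ σ.t → Disjoint (σ.Gs i) (σ.W j) := σ.hws.2.2.1
  refine PnSimp.ext' (by rfl) ?_ ?_ <;> funext i <;>
    rcases Nat.eq_zero_or_pos i with h0 | h1
  · subst h0
    show fwdW (bwd σ) 0 = σ.W 0
    rw [fwdW_zero]
    exact biUnion_bwdB σ
  · have hi0 : i ≠ 0 := by omega
    show fwdW (bwd σ) i = σ.W i
    rw [fwdW_pos _ hi0]
    exact bwdC_pos σ hi0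
  · subst h0
    show fwdG (bwd σ) 0 = σ.Gs 0
    rw [fwdG_zero]
    show Finset.range (n + 1) \ (Finset.Icc 1 σ.t).biUnion (bwdB σ) = σ.Gs 0
    rw [biUnion_bwdB σ, ← σ.h1, Finset.union_sdiff_cancel_left]
    exact (hGW 0 0 le_rfl (Nat.zero_le _)).symm
  · have hi0 : i ≠ 0 := by omega
    show fwdG (bwd σ) i = σ.Gs i
    rw [fwdG_pos _ hi0]
    show bwdB σ i \ bwdC σ i = σ.Gs i
    rw [bwdB_pos σ hi0, bwdC_pos σ hi0]
    rcases le_or_gt i σ.t with hi | hi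
    · rw [Finset.union_sdiff_cancel_left]
      exact (hGW i i le_rfl hi).symm
    · have h := σ.hout i hi
      simp [h.1, h.2]

lemma card_active (τ : ChromSimp n) :
    (((fwd τ).W 0 ∪ (fwd τ).Gs 0) \
        (Finset.range ((fwd τ).t + 1)).biUnion (fwd τ).Gs).card =
      ∑ i ∈ Finset.Icc 1 τ.t, (τ.C i).card := by
  have hset : ((fwd τ).W 0 ∪ (fwd τ).Gs 0) \
      (Finset.range ((fwd τ).t + 1)).biUnion (fwd τ).Gs =
      (Finset.Icc 1 τ.t).biUnion τ.C := by
    rw [(fwd τ).h1]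
    show Finset.range (n + 1) \ (Finset.range (τ.t + 1)).biUnion (fwdG τ) = _
    ext x
    simp only [Finset.mem_sdiff, Finset.mem_biUnion, Finset.mem_Icc]
    constructor
    · rintro ⟨hx, hG⟩
      push_neg at hG
      have h0 := hG 0 (Finset.mem_range.2 (by omega))
      rw [fwdG_zero, Finset.mem_sdiff] at h0
      push_neg at h0
      have hB := h0 hx
      rw [Finset.mem_biUnion] at hB
      obtain ⟨i, hi, hxi⟩ := hB
      rw [Finset.mem_Icc] at hi
      have hi0 : i ≠ 0 := by omega
      have hGi := hG i (Finset.mem_range.2 (by omega))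
      rw [fwdG_pos τ hi0, Finset.mem_sdiff] at hGi
      push_neg at hGi
      exact ⟨i, hi, hGi hxi⟩
    · rintro ⟨i, hi, hxi⟩
      have hi0 : i ≠ 0 := by omega
      have hxB : x ∈ τ.B i := Csub τ i hxi
      have hxU : x ∈ (Finset.Icc 1 τ.t).biUnion τ.B :=
        Finset.mem_biUnion.2 ⟨i, Finset.mem_Icc.2 hi, hxB⟩
      refine ⟨(τ.hB i hi.1 hi.2).2 hxB, ?_⟩
      push_neg
      intro j hj
      rcases Nat.eq_zero_or_pos j with rfl | hj1
      · rw [fwdG_zero, Finset.mem_sdiff]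
        tauto
      · have hj0 : j ≠ 0 := by omega
        rw [fwdG_pos τ hj0, Finset.mem_sdiff]
        push_neg
        intro hxBj
        rcases eq_or_ne j i with rfl | hne
        · exact hxi
        · exact absurd hxB (Finset.disjoint_left.1 (Bdisj τ j i hne) hxBj)
  rw [hset]
  exact Finset.card_biUnion fun i hi j hj hne =>
    (Bdisj τ i j hne).mono (Csub τ i) (Csub τ j)

end ChromIso

/-- the bijection between the simplices of the standard chromatic
subdivision `χ(Δⁿ)` and the simplices of `P_n = P(1,…,1)`, sending `((B_i),(C_i))`
to the witness structure with `W_0 = B_1 ∪ ⋯ ∪ B_t`, `G_0 = {0,…,n} \ W_0`,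
`W_i = C_i`, `G_i = B_i \ C_i`, with inverse
`σ ↦ ((W_1 ∪ G_1,…,W_t ∪ G_t),(W_1,…,W_t))`; it preserves dimension:
`|C_1| + ⋯ + |C_t| − 1 = |A(σ)| − 1`. -/
theorem chromatic_subdivision_iso (n : ℕ) :
    ∃ e : ChromSimp n ≃ PnSimp n,
      (∀ τ : ChromSimp n,
        (e τ).t = τ.t ∧
        (e τ).W 0 = (Finset.Icc 1 τ.t).biUnion τ.B ∧
        (e τ).Gs 0 = Finset.range (n + 1) \ (Finset.Icc 1 τ.t).biUnion τ.B ∧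
        (∀ i, 1 ≤ i → i ≤ τ.t → (e τ).W i = τ.C i ∧ (e τ).Gs i = τ.B i \ τ.C i) ∧
        (((e τ).W 0 ∪ (e τ).Gs 0) \
            (Finset.range ((e τ).t + 1)).biUnion (e τ).Gs).card =
          ∑ i ∈ Finset.Icc 1 τ.t, (τ.C i).card) ∧
      (∀ σ : PnSimp n,
        (e.symm σ).t = σ.t ∧
        ∀ i, 1 ≤ i → i ≤ σ.t →
          (e.symm σ).B i = σ.W i ∪ σ.Gs i ∧ (e.symm σ).C i = σ.W i) := by
    classical
  refine ⟨⟨ChromIso.fwd, ChromIso.bwd, ChromIso.bwd_fwd, ChromIso.fwd_bwd⟩, ?_, ?_⟩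
  · intro τ
    refine ⟨rfl, rfl, rfl, ?_, ChromIso.card_active τ⟩
    intro i h1 hi
    have hi0 : i ≠ 0 := by omega
    exact ⟨ChromIso.fwdW_pos τ hi0, ChromIso.fwdG_pos τ hi0⟩
  · intro σ
    refine ⟨rfl, ?_⟩
    intro i h1 hi
    have hi0 : i ≠ 0 := by omega
    exact ⟨ChromIso.bwdB_pos σ hi0, ChromIso.bwdC_pos σ hi0⟩
end

section
/- Let σ = ((W_0,G_0),…,(W_t,G_t)) be a witness structure indexing a simplex of P(r̄) (so |Tr(p,σ)| = r̄(p)+1 for p ∈ A(σ) and |Tr(p,σ)| ≤ r̄(p)+1 for p ∈ G(σ)). For p ∈ G(σ) set m(p) = r̄(p)+1−|Tr(p,σ)|, let q = max_{p∈G(σ)} m(p), and V_i = {p ∈ G(σ) : m(p) ≥ i} for 1 ≤ i ≤ q. Then σ̃ := (W_0∪G_0, W_1∪G_1, …, W_t∪G_t, V_1, …, V_q) (all ghost sets empty) is a witness structure indexing a simplex of P(r̄) with A(σ̃) = supp r̄ and dim σ̃ = |supp r̄| − 1, and Γ_{G(σ)}(σ̃) = σ. Consequently P(r̄) is a pure simplicial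 complex of dimension |supp r̄| − 1. -/
open scoped Classical

/-- The witness structure `(A,G,Tr)` indexes a simplex of the immediate snapshot
complex `P(r̄)` for the round counter `r̄ = (r 0, …, r n)`:  the support is
`{0,…,n}`, active elements have trace of size `r p + 1`, ghosts of size
`≤ r p + 1`. -/
def IsSimplexOf (r : ℕ → ℕ) (n : ℕ) (A G : Finset ℕ) (Tr : ℕ → Finset ℕ) : Prop :=
  IsWS A G Tr ∧ A ∪ G = Finset.range (n + 1) ∧
    (∀ p ∈ A, (Tr p).card = r p + 1) ∧ (∀ p ∈ G, (Tr p).card ≤ r p + 1)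

lemma surv_congr {A G : Finset ℕ} {T1 T2 : ℕ → Finset ℕ}
    (hEq : ∀ p ∈ A ∪ G, T1 p = T2 p) (k : ℕ) :
    Surv A G T1 k ↔ Surv A G T2 k := by
  unfold Surv
  constructor <;> rintro (rfl | ⟨p, hp, hk, hn⟩)
  · left; rfl
  · right; exact ⟨p, hp, by rwa [← hEq p hp], by rwa [← hEq p hp]⟩
  · left; rfl
  · right; exact ⟨p, hp, by rwa [hEq p hp], by rwa [hEq p hp]⟩

lemma collapse_eq_self {A G : Finset ℕ} {T : ℕ → Finset ℕ} {k : ℕ}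
    (hall : ∀ j < k, Surv A G T j) : collapse A G T k = k := by
  unfold collapse
  rw [Finset.filter_true_of_mem fun j hj => hall j (Finset.mem_range.mp hj),
    Finset.card_range]

lemma purity_main (r : ℕ → ℕ) (n : ℕ) (A G : Finset ℕ) (Tr : ℕ → Finset ℕ)
    (h : IsSimplexOf r n A G Tr) (t : ℕ) (ht : t = ((A ∪ G).biUnion Tr).sup id)
    (Tr' : ℕ → Finset ℕ)
    (hTr' : Tr' = fun p => if p ∈ G then
        Tr p ∪ Finset.Icc (t + 1) (t + (r p + 1 - (Tr p).card)) else Tr p) :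
    IsSimplexOf r n (A ∪ G) ∅ Tr' ∧ (A ∪ G).card = n + 1 ∧
      (A ∪ G) \ G = A ∧ (∅ ∪ G : Finset ℕ) = G ∧
      (∀ p ∈ A ∪ G, ghostTr (A ∪ G) ∅ G Tr' p = Tr p) := by
  obtain ⟨⟨⟨hdisj, h0, hdc⟩, hTW⟩, hsupp, hcA, hcG⟩ := h
  have hAG : (A ∪ G) \ G = A := Finset.union_sdiff_cancel_right hdisj
  have hne : (A ∪ G).Nonempty := by rw [hsupp]; exact Finset.nonempty_range_add_one
  have hmem_le : ∀ p ∈ A ∪ G, ∀ k ∈ Tr p, k ≤ t := fun p hp k hk => by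
    rw [ht]; exact Finset.le_sup (f := id) (Finset.mem_biUnion.mpr ⟨p, hp, hk⟩)
  have hTr'G : ∀ p ∈ G, Tr' p = Tr p ∪ Finset.Icc (t + 1)
      (t + (r p + 1 - (Tr p).card)) := fun p hp => by rw [hTr']; simp [hp]
  have hTr'A : ∀ p, p ∉ G → Tr' p = Tr p := fun p hp => by rw [hTr']; simp [hp]
  have hTrsub : ∀ p, Tr p ⊆ Tr' p := by
    intro p k hk
    by_cases hpG : p ∈ G
    · rw [hTr'G p hpG]; exact Finset.mem_union_left _ hk
    · rw [hTr'A p hpG]; exact hk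
  have hdisjIcc : ∀ p ∈ A ∪ G, ∀ a b : ℕ,
      Disjoint (Tr p) (Finset.Icc (t + 1) b) := by
    intro p hp a b
    rw [Finset.disjoint_left]
    intro x hx hx'
    have := hmem_le p hp x hx
    have := (Finset.mem_Icc.mp hx').1
    omega
  -- the union of traces is an initial segment [0..t]
  have hbUne : ((A ∪ G).biUnion Tr).Nonempty := by
    obtain ⟨p, hp⟩ := hne
    exact ⟨0, Finset.mem_biUnion.mpr ⟨p, hp, h0 p hp⟩⟩
  have htmem : t ∈ (A ∪ G).biUnion Tr := by
    obtain ⟨b, hb, hbe⟩ := Finset.exists_mem_eq_sup _ hbUne id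
    rw [ht, hbe]; exact hb
  have hbU : ∀ j ≤ t, j ∈ (A ∪ G).biUnion Tr := fun j hj => hdc j t hj htmem
  -- t is attained on A (or t = 0)
  have htop : t = 0 ∨ ∃ p ∈ A, t ∈ Tr p := by
    by_cases ht0 : t = 0
    · left; exact ht0
    · right
      rcases hTW t htmem with rfl | ⟨p, hp, hkp, hnot⟩
      · exact absurd rfl ht0
      · have hpA : p ∈ A := by
          rcases Finset.mem_union.mp hp with h' | h'
          · exact h'
          · exfalso
            refine hnot ⟨h', le_antisymm ?_ (Finset.le_sup (f := id) hkp)⟩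
            exact Finset.sup_le fun x hx => hmem_le p hp x hx
        exact ⟨p, hpA, hkp⟩
  -- stabilization
  have hQ : stabQ (A ∪ G) G Tr' = t := by
    unfold stabQ
    split_ifs with hGe
    · have hA : A = ∅ := Finset.eq_empty_of_forall_notMem fun a ha =>
        Finset.disjoint_left.mp hdisj ha (by rw [hGe]; exact Finset.mem_union_left _ ha)
      rcases htop with h' | ⟨p, hpA, _⟩
      · omega
      · rw [hA] at hpA; exact absurd hpA (Finset.notMem_empty p)
    · rw [hAG]
      have hbeq : A.biUnion Tr' = A.biUnion Tr :=
        Finset.biUnion_congr rfl fun p hp =>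
          hTr'A p (Finset.disjoint_left.mp hdisj hp)
      rw [hbeq]
      apply le_antisymm
      · exact Finset.sup_mono (Finset.biUnion_subset_biUnion_of_subset_left _
          Finset.subset_union_left) |>.trans_eq ht.symm
      · rcases htop with h' | ⟨p, hpA, hkp⟩
        · omega
        · exact Finset.le_sup (f := id) (Finset.mem_biUnion.mpr ⟨p, hpA, hkp⟩)
  have hstab : ∀ p ∈ A ∪ G, stabTr (A ∪ G) G Tr' p = Tr p := by
    intro p hp
    unfold stabTr
    rw [hQ]
    have h1 : Tr p ∩ Finset.range (t + 1) = Tr p :=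
      Finset.inter_eq_left.mpr fun x hx =>
        Finset.mem_range.mpr (Nat.lt_succ_of_le (hmem_le p hp x hx))
    by_cases hpG : p ∈ G
    · rw [hTr'G p hpG, Finset.union_inter_distrib_right, h1]
      have h2 : Finset.Icc (t + 1) (t + (r p + 1 - (Tr p).card)) ∩
          Finset.range (t + 1) = ∅ := by
        ext x; simp only [Finset.mem_inter, Finset.mem_Icc, Finset.mem_range,
          Finset.notMem_empty, iff_false]; omega
      rw [h2, Finset.union_empty]
    · rw [hTr'A p hpG, h1]
  refine ⟨⟨⟨⟨Finset.disjoint_empty_right _, ?_, ?_⟩, ?_⟩, ?_, ?_, ?_⟩, ?_, hAG,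
    Finset.empty_union G, ?_⟩
  · -- 0 in every trace
    intro p hp
    rw [Finset.union_empty] at hp
    exact hTrsub p (h0 p hp)
  · -- downward closure for Tr'
    intro j k hjk hk
    rw [Finset.union_empty] at hk ⊢
    have hlift : ∀ i, i ∈ (A ∪ G).biUnion Tr → i ∈ (A ∪ G).biUnion Tr' := by
      intro i hi
      obtain ⟨q, hq, hiq⟩ := Finset.mem_biUnion.mp hi
      exact Finset.mem_biUnion.mpr ⟨q, hq, hTrsub q hiq⟩
    obtain ⟨p, hp, hkp⟩ := Finset.mem_biUnion.mp hk
    by_cases hjt : j ≤ t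
    · exact hlift j (hbU j hjt)
    · -- j > t, hence k > t, so k is in the Icc part of a ghost
      have hpG : p ∈ G := by
        by_contra hpG
        rw [hTr'A p hpG] at hkp
        have := hmem_le p hp k hkp
        omega
      rw [hTr'G p hpG] at hkp
      rcases Finset.mem_union.mp hkp with h' | h'
      · have := hmem_le p hp k h'
        omega
      · have := Finset.mem_Icc.mp h'
        refine Finset.mem_biUnion.mpr ⟨p, hp, ?_⟩
        rw [hTr'G p hpG]
        exact Finset.mem_union_right _ (Finset.mem_Icc.mpr (by omega))
  · -- TW for σ̃
    intro k hk
    rw [Finset.union_empty] at hk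
    obtain ⟨p, hp, hkp⟩ := Finset.mem_biUnion.mp hk
    right
    exact ⟨p, by rw [Finset.union_empty]; exact hp, hkp,
      fun ⟨hpe, _⟩ => Finset.notMem_empty p hpe⟩
  · rw [Finset.union_empty]; exact hsupp
  · -- cards of active traces
    intro p hp
    by_cases hpG : p ∈ G
    · rw [hTr'G p hpG, Finset.card_union_of_disjoint (hdisjIcc p hp 0 _),
        Nat.card_Icc]
      have := hcG p hpG
      omega
    · rw [hTr'A p hpG]
      rcases Finset.mem_union.mp hp with h' | h'
      · exact hcA p h'
      · exact absurd h' hpG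
  · intro p hp; exact absurd hp (Finset.notMem_empty p)
  · rw [hsupp, Finset.card_range]
  · -- ghosting recovers σ
    intro p hp
    unfold ghostTr
    rw [hAG, Finset.empty_union]
    unfold canonTr
    rw [hstab p hp]
    have hcoll : ∀ k ∈ Tr p, collapse A G (stabTr (A ∪ G) G Tr') k = k := by
      intro k hk
      apply collapse_eq_self
      intro j hj
      have hjT : Surv A G Tr j :=
        hTW j (hdc j k (le_of_lt hj) (Finset.mem_biUnion.mpr ⟨p, hp, hk⟩))
      exact (surv_congr (fun q hq => hstab q hq) j).mpr hjT
    rw [Finset.image_congr (fun k hk => hcoll k (by simpa using hk)), Finset.image_id']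

/-- purity of `P(r̄)`.  Given a simplex `σ = (A,G,Tr)` of `P(r̄)`,
let `t` be the top index of `σ`, `m(p) = r̄(p)+1−|Tr(p)|` for ghosts `p`, and
extend the traces of the ghosts by `m(p)` new occurrences `t+1,…,t+m(p)`
(this is the witness structure
`σ̃ = (W_0 ∪ G_0, W_1 ∪ G_1, …, W_t ∪ G_t, V_1, …, V_q)` with all ghost sets
empty, `V_i = {p ∈ G : m(p) ≥ i}`).  Then `σ̃` is a simplex of `P(r̄)` with
`A(σ̃) = supp r̄` and `dim σ̃ = |supp r̄| − 1`, and `Γ_{G(σ)}(σ̃) = σ`; hence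
`P(r̄)` is pure of dimension `|supp r̄| − 1` (Proposition 4.6 of the paper). -/
theorem immediate_snapshot_complex_pure (r : ℕ → ℕ) (n : ℕ)
    (A G : Finset ℕ) (Tr : ℕ → Finset ℕ)
    (h : IsSimplexOf r n A G Tr) :
    (fun (t : ℕ) (Tr' : ℕ → Finset ℕ) =>
      -- `σ̃` is a simplex of `P(r̄)` with full active set:
      IsSimplexOf r n (A ∪ G) ∅ Tr' ∧
      -- `dim σ̃ = |supp r̄| − 1`:
      (A ∪ G).card = n + 1 ∧
      -- `Γ_{G(σ)}(σ̃) = σ`: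
      (A ∪ G) \ G = A ∧ (∅ ∪ G : Finset ℕ) = G ∧
      (∀ p ∈ A ∪ G, ghostTr (A ∪ G) ∅ G Tr' p = Tr p))
    (((A ∪ G).biUnion Tr).sup id)
    (fun p => if p ∈ G then
        Tr p ∪ Finset.Icc (((A ∪ G).biUnion Tr).sup id + 1)
          (((A ∪ G).biUnion Tr).sup id + (r p + 1 - (Tr p).card))
      else Tr p) :=
  purity_main r n A G Tr h _ rfl _ rfl
end

section
/- For all natural numbers m, n ≥ 1, the immediate snapshot complex P(m,n) is a subdivided interval: it is a connected graph in which every vertex has degree 2 except for exactly two vertices of degree 1, namely v⁰ = ((0,1),(0,∅),…,(0,∅)) (m trailing pairs) and v¹ = ((1,0),(1,∅),…,(1,∅)) (n trailing pairs), where, in the concrete combinatorial model, vertices are witness structures of dimension 0 on support {0,1} with the trace-length conditions of P(m,n), edges are witness structures of dimension 1, and incidence is given by ghosting. -/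
open scoped Classical

/-- A simplex of `P(m,n)` as a triple `(A, G, Tr)` (active set, ghost set,
traces). -/
abbrev Triple := Finset ℕ × Finset ℕ × (ℕ → Finset ℕ)

/-- The round counter `(m, n)` on the two processes `0` and `1`. -/
def RC2 (m n : ℕ) : ℕ → ℕ := fun i => if i = 0 then m else n

/-- `v` is a vertex (`0`-dimensional simplex) of `P(m,n)`; traces outside the
support `{0,1}` are normalized to be empty. -/
def IsVert (m n : ℕ) (v : Triple) : Prop :=
  IsSimplexOf (RC2 m n) 1 v.1 v.2.1 v.2.2 ∧ v.1.card = 1 ∧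
    ∀ p, p ∉ Finset.range 2 → v.2.2 p = ∅

/-- `e` is an edge (`1`-dimensional simplex) of `P(m,n)`; traces outside the
support `{0,1}` are normalized to be empty. -/
def IsEdge (m n : ℕ) (e : Triple) : Prop :=
  IsSimplexOf (RC2 m n) 1 e.1 e.2.1 e.2.2 ∧ e.1.card = 2 ∧
    ∀ p, p ∉ Finset.range 2 → e.2.2 p = ∅

/-- The vertex `v` is a face of the edge `e`, i.e. `v = Γ_{A(e) \ {p}}(e)` for
some `p ∈ A(e)` (incidence is given by ghosting). -/
def IncTo (e v : Triple) : Prop :=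
  ∃ p ∈ e.1, v.1 = {p} ∧ v.2.1 = e.2.1 ∪ (e.1 \ {p}) ∧
    ∀ q ∈ Finset.range 2, v.2.2 q = ghostTr e.1 e.2.1 (e.1 \ {p}) e.2.2 q

/-- The graph of `P(m,n)`: vertices are the vertices of `P(m,n)`, two of them
adjacent when they are the two faces of a common edge. -/
def ISGraph (m n : ℕ) : SimpleGraph {v : Triple // IsVert m n v} where
  Adj u v := u ≠ v ∧ ∃ e : Triple, IsEdge m n e ∧ IncTo e u.1 ∧ IncTo e v.1
  symm := by
    constructor
    intro u v h
    exact ⟨h.1.symm, h.2.imp fun e he => ⟨he.1, he.2.2, he.2.1⟩⟩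
  loopless := by constructor; intro v h; exact h.1 rfl

/-! ### Auxiliary development -/

open Finset

namespace ISAux

/-- membership gives bound by sup -/
lemma le_supid {S : Finset ℕ} {x : ℕ} (h : x ∈ S) : x ≤ S.sup id :=
  Finset.le_sup (f := id) h

lemma supid_mem {S : Finset ℕ} (h : S.Nonempty) : S.sup id ∈ S := by
  obtain ⟨i, hi, hs⟩ := Finset.exists_mem_eq_sup S h id
  simpa [hs] using hi

/-- downward closed set of naturals -/
def DC (S : Finset ℕ) : Prop := ∀ ⦃j k : ℕ⦄, j ≤ k → k ∈ S → j ∈ S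

lemma DC.mem_iff {S : Finset ℕ} (h : DC S) (h0 : S.Nonempty) {k : ℕ} :
    k ∈ S ↔ k ≤ S.sup id :=
  ⟨le_supid, fun hk => h hk (supid_mem h0)⟩

/-- the trace function of a structure on support {0,1} -/
def eTr (S0 S1 : Finset ℕ) : ℕ → Finset ℕ :=
  fun p => if p = 0 then S0 else if p = 1 then S1 else ∅

/-- the edge triple -/
def mkE (S0 S1 : Finset ℕ) : Triple := ({0, 1}, ∅, eTr S0 S1)

/-- the active-0 vertex triple -/
def mkV0 (T0 T1 : Finset ℕ) : Triple := ({0}, {1}, eTr T0 T1)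

/-- the trace function written 1-first -/
def eTr1 (S0 S1 : Finset ℕ) : ℕ → Finset ℕ :=
  fun p => if p = 1 then S1 else if p = 0 then S0 else ∅

/-- the active-1 vertex triple -/
def mkV1 (T0 T1 : Finset ℕ) : Triple := ({1}, {0}, eTr1 T0 T1)

lemma eTr1_eq (S0 S1 : Finset ℕ) : eTr1 S0 S1 = eTr S0 S1 := by
  funext p
  rcases p with _ | _ | n <;> simp [eTr, eTr1]

section Ghost1

variable {S0 S1 : Finset ℕ}

/-- truncation of S1 at the sup of S0 -/
noncomputable def trunc (S0 S1 : Finset ℕ) : Finset ℕ :=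
  S1 ∩ Finset.range (S0.sup id + 1)

lemma pair_sdiff : ({0, 1} : Finset ℕ) \ {1} = {0} := by decide

lemma pair_union : ({0} : Finset ℕ) ∪ {1} = {0, 1} := by decide

lemma ghost1_stabQ : stabQ {0, 1} {1} (eTr S0 S1) = S0.sup id := by
  have hne : ({1} : Finset ℕ) ≠ {0, 1} := by decide
  rw [stabQ, if_neg hne, pair_sdiff]
  simp [eTr]

lemma ghost1_stabTr :
    stabTr {0, 1} {1} (eTr S0 S1) = eTr S0 (trunc S0 S1) := by
  funext p
  rw [stabTr, ghost1_stabQ]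
  rcases eq_or_ne p 0 with rfl | h0
  · simp only [eTr, if_pos rfl]
    exact Finset.inter_eq_left.2 fun x hx => Finset.mem_range.2 (Nat.lt_succ_of_le (le_supid hx))
  · rcases eq_or_ne p 1 with rfl | h1
    · simp [eTr, trunc]
    · simp [eTr, h0, h1]

lemma ghost1_surv (h00 : 0 ∈ S0) (k : ℕ) :
    Surv {0} {1} (eTr S0 (trunc S0 S1)) k ↔
      (k ∈ S0 ∨ (k ∈ trunc S0 S1 ∧ (trunc S0 S1).sup id ≠ k)) := by
  constructor
  · rintro (rfl | ⟨p, hp, hk, hng⟩)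
    · exact Or.inl h00
    · rw [pair_union] at hp
      simp only [Finset.mem_insert, Finset.mem_singleton] at hp
      rcases hp with rfl | rfl
      · exact Or.inl (by simpa [eTr] using hk)
      · refine Or.inr ⟨by simpa [eTr] using hk, fun h => hng ⟨Finset.mem_singleton_self 1, ?_⟩⟩
        simpa [eTr] using h
  · rintro (h | ⟨h, hne⟩)
    · exact Or.inr ⟨0, by rw [pair_union]; decide, by simpa [eTr] using h,
        fun hc => by simpa using hc.1⟩
    · exact Or.inr ⟨1, by rw [pair_union]; decide, by simpa [eTr] using h,
        fun hc => hne (by simpa [eTr] using hc.2)⟩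

end Ghost1


section Ghost2

variable {S0 S1 : Finset ℕ}

lemma zero_mem_trunc (h01 : 0 ∈ S1) : 0 ∈ trunc S0 S1 := by
  simp [trunc, h01]

lemma trunc_le {x : ℕ} (hx : x ∈ trunc S0 S1) : x ≤ S0.sup id := by
  have h := Finset.mem_range.1 (Finset.mem_inter.1 hx).2
  omega

lemma mem_or_trunc (hdc : DC (S0 ∪ S1)) (h00 : 0 ∈ S0) {k : ℕ} (hk : k ≤ S0.sup id) :
    k ∈ S0 ∨ k ∈ trunc S0 S1 := by
  have hmem : k ∈ S0 ∪ S1 :=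
    hdc hk (Finset.mem_union_left _ (supid_mem ⟨0, h00⟩))
  rcases Finset.mem_union.1 hmem with h | h
  · exact Or.inl h
  · exact Or.inr (Finset.mem_inter.2 ⟨h, Finset.mem_range.2 (Nat.lt_succ_of_le hk)⟩)

lemma collapse_all {A G : Finset ℕ} {Tr : ℕ → Finset ℕ} {j : ℕ}
    (h : ∀ i < j, Surv A G Tr i) : collapse A G Tr j = j := by
  unfold collapse
  rw [Finset.filter_true_of_mem (fun i hi => h i (Finset.mem_range.1 hi)), Finset.card_range]

lemma collapse_skip {A G : Finset ℕ} {Tr : ℕ → Finset ℕ} {b j : ℕ}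
    (hb : ¬ Surv A G Tr b) (h : ∀ i < j, i ≠ b → Surv A G Tr i) (hbj : b < j) :
    collapse A G Tr j = j - 1 := by
  unfold collapse
  have he : (Finset.range j).filter (Surv A G Tr) = (Finset.range j).erase b := by
    ext i
    simp only [Finset.mem_filter, Finset.mem_erase, Finset.mem_range]
    exact ⟨fun ⟨h1, h2⟩ => ⟨fun e => hb (e ▸ h2), h1⟩, fun ⟨h1, h2⟩ => ⟨h2, h i h2 h1⟩⟩
  rw [he, Finset.card_erase_of_mem (Finset.mem_range.2 hbj), Finset.card_range]

lemma ghost1_unfold :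
    ghostTr {0, 1} ∅ {1} (eTr S0 S1) = canonTr {0} {1} (eTr S0 (trunc S0 S1)) := by
  unfold ghostTr
  rw [pair_sdiff, Finset.empty_union, ghost1_stabTr]

/-- the collapse-at-b renumbering -/
def clps (b : ℕ) : ℕ → ℕ := fun x => if x ≤ b then x else x - 1

lemma ghost1_eval_case1 (hdc : DC (S0 ∪ S1)) (h00 : 0 ∈ S0) (h01 : 0 ∈ S1)
    (hb : (trunc S0 S1).sup id ∈ S0) :
    ghostTr {0, 1} ∅ {1} (eTr S0 S1) = eTr S0 (trunc S0 S1) := by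
  rw [ghost1_unfold]
  have hsurv : ∀ k ≤ S0.sup id, Surv {0} {1} (eTr S0 (trunc S0 S1)) k := by
    intro k hk
    rw [ghost1_surv h00]
    rcases mem_or_trunc hdc h00 hk with h | h
    · exact Or.inl h
    · rcases eq_or_ne ((trunc S0 S1).sup id) k with rfl | hne
      · exact Or.inl hb
      · exact Or.inr ⟨h, hne⟩
  have hcol : ∀ x, x ≤ S0.sup id →
      collapse {0} {1} (eTr S0 (trunc S0 S1)) x = x := fun x hx =>
    collapse_all (fun i hi => hsurv i (le_of_lt (lt_of_lt_of_le hi hx)))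
  funext p
  unfold canonTr
  rcases p with _ | _ | p
  · simp only [eTr]
    norm_num
    rw [Finset.image_congr (g := id) (fun x hx => hcol x (le_supid hx)), Finset.image_id]
  · simp only [eTr]
    norm_num
    rw [Finset.image_congr (g := id) (fun x hx => hcol x (trunc_le hx)), Finset.image_id]
  · simp [eTr]

lemma ghost1_eval_case2 (hdc : DC (S0 ∪ S1)) (h00 : 0 ∈ S0) (h01 : 0 ∈ S1)
    (hb : (trunc S0 S1).sup id ∉ S0) :
    ghostTr {0, 1} ∅ {1} (eTr S0 S1) =
      eTr (S0.image (clps ((trunc S0 S1).sup id))) (trunc S0 S1) := by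
  set b := (trunc S0 S1).sup id with hbdef
  have hble : b ≤ S0.sup id := trunc_le (supid_mem ⟨0, zero_mem_trunc h01⟩)
  have hblt : b < S0.sup id :=
    lt_of_le_of_ne hble (fun h => hb (h ▸ supid_mem ⟨0, h00⟩))
  have hnsurv : ¬ Surv {0} {1} (eTr S0 (trunc S0 S1)) b := by
    rw [ghost1_surv h00]
    rintro (h | ⟨_, hne⟩)
    · exact hb h
    · exact hne rfl
  have hsurv : ∀ k, k ≠ b → k ≤ S0.sup id → Surv {0} {1} (eTr S0 (trunc S0 S1)) k := by
    intro k hkb hk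
    rw [ghost1_surv h00]
    rcases mem_or_trunc hdc h00 hk with h | h
    · exact Or.inl h
    · exact Or.inr ⟨h, fun h' => hkb h'.symm⟩
  have hcol : ∀ x, x ≤ S0.sup id → x ≠ b →
      collapse {0} {1} (eTr S0 (trunc S0 S1)) x = clps b x := by
    intro x hx hxb
    rcases lt_or_gt_of_ne hxb with h | h
    · rw [collapse_all (fun i hi => hsurv i (by omega) (by omega))]
      simp [clps, le_of_lt h]
    · rw [collapse_skip hnsurv (fun i hi hib => hsurv i hib (by omega)) h]
      simp [clps, Nat.not_le.2 h]
  rw [ghost1_unfold]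
  funext p
  unfold canonTr
  rcases p with _ | _ | p
  · simp only [eTr]
    norm_num
    exact Finset.image_congr (fun x hx => hcol x (le_supid hx) (fun e => hb (e ▸ hx)))
  · simp only [eTr]
    norm_num
    rw [Finset.image_congr (g := id) (fun x hx => ?_), Finset.image_id]
    have hxb : x ≤ b := le_supid hx
    exact collapse_all fun i hi => hsurv i (by omega) (by omega)
  · simp [eTr]

end Ghost2


section Char

variable {m n : ℕ} {S0 S1 T0 T1 : Finset ℕ}

/-- data of an edge of P(m,n) -/
def EData (m n : ℕ) (S0 S1 : Finset ℕ) : Prop :=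
  0 ∈ S0 ∧ 0 ∈ S1 ∧ S0.card = m + 1 ∧ S1.card = n + 1 ∧ DC (S0 ∪ S1)

/-- data of a vertex with active trace `Ta` (active process has round count a) -/
def VData (a b : ℕ) (Ta Tb : Finset ℕ) : Prop :=
  0 ∈ Ta ∧ 0 ∈ Tb ∧ Ta.card = a + 1 ∧ Tb.card ≤ b + 1 ∧ DC (Ta ∪ Tb) ∧ Tb.sup id ∈ Ta

lemma biUnion_pair (f : ℕ → Finset ℕ) : ({0, 1} : Finset ℕ).biUnion f = f 0 ∪ f 1 := by
  rw [show ({0, 1} : Finset ℕ) = insert 0 {1} from rfl, Finset.biUnion_insert,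
    Finset.singleton_biUnion]

lemma range_two : (Finset.range 2 : Finset ℕ) = {0, 1} := by decide

lemma triple_ext {e : Triple} {a b : Finset ℕ} {c : ℕ → Finset ℕ}
    (h1 : e.1 = a) (h2 : e.2.1 = b) (h3 : e.2.2 = c) : e = (a, b, c) := by
  obtain ⟨x, y, z⟩ := e
  simp only at h1 h2 h3
  rw [h1, h2, h3]

lemma eTr_two {p : ℕ} (hp : p ∉ Finset.range 2) : eTr S0 S1 p = ∅ := by
  rw [range_two] at hp
  simp only [Finset.mem_insert, Finset.mem_singleton, not_or] at hp
  simp [eTr, hp.1, hp.2]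

lemma RC2_zero : RC2 m n 0 = m := rfl
lemma RC2_one : RC2 m n 1 = n := rfl

lemma isEdge_mkE (h : EData m n S0 S1) : IsEdge m n (mkE S0 S1) := by
  obtain ⟨h00, h01, hc0, hc1, hdc⟩ := h
  unfold IsEdge IsSimplexOf IsWS IsPre mkE
  simp only
  refine ⟨⟨⟨⟨?_, ?_, ?_⟩, ?_⟩, ?_, ?_, ?_⟩, ?_, ?_⟩
  · exact Finset.disjoint_empty_right _
  · intro p hp
    rw [Finset.union_empty] at hp
    simp only [Finset.mem_insert, Finset.mem_singleton] at hp
    rcases hp with rfl | rfl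
    · simpa [eTr] using h00
    · simpa [eTr] using h01
  · intro j k hjk hk
    rw [Finset.union_empty, biUnion_pair] at hk ⊢
    exact hdc hjk (by simpa [eTr] using hk)
  · intro k hk
    rw [Finset.union_empty, biUnion_pair] at hk
    simp only [eTr] at hk
    norm_num at hk
    rcases hk with h | h
    · exact Or.inr ⟨0, by rw [Finset.union_empty]; exact Finset.mem_insert_self 0 _,
        by simpa [eTr] using h, fun hc => by simpa using hc.1⟩
    · exact Or.inr ⟨1, by rw [Finset.union_empty]; decide,
        by simpa [eTr] using h, fun hc => by simpa using hc.1⟩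
  · rw [Finset.union_empty, range_two]
  · intro p hp
    simp only [Finset.mem_insert, Finset.mem_singleton] at hp
    rcases hp with rfl | rfl
    · simpa [eTr, RC2_zero] using hc0
    · simpa [eTr, RC2_one] using hc1
  · intro p hp
    exact absurd hp (Finset.notMem_empty p)
  · decide
  · exact fun p hp => eTr_two hp

lemma isEdge_iff {e : Triple} :
    IsEdge m n e ↔ ∃ S0 S1, EData m n S0 S1 ∧ e = mkE S0 S1 := by
  constructor
  · rintro ⟨⟨⟨⟨hdisj, h0, hT2⟩, _⟩, hAG, hA, _⟩, hcard, hnorm⟩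
    have hA2 : e.1 = {0, 1} := by
      rw [← range_two, ← hAG]
      exact Finset.eq_of_subset_of_card_le Finset.subset_union_left
        (by rw [hAG]; simpa [hcard] using (by decide : (Finset.range 2).card ≤ 2))
    have hG : e.2.1 = ∅ := by
      have hsub : e.2.1 ⊆ e.1 := by
        intro x hx
        have : x ∈ e.1 ∪ e.2.1 := Finset.mem_union_right _ hx
        rw [hAG, range_two, ← hA2] at this
        exact this
      have := Finset.disjoint_left.1 hdisj
      exact Finset.eq_empty_of_forall_notMem (fun x hx => this (hsub hx) hx)
    have hmem : ∀ p ∈ ({0, 1} : Finset ℕ), 0 ∈ e.2.2 p := by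
      intro p hp
      exact h0 p (by rw [hAG, range_two]; exact hp)
    have hbi : (e.1 ∪ e.2.1).biUnion e.2.2 = e.2.2 0 ∪ e.2.2 1 := by
      rw [hA2, hG, Finset.union_empty, biUnion_pair]
    refine ⟨e.2.2 0, e.2.2 1, ⟨hmem 0 (by decide), hmem 1 (by decide), ?_, ?_, ?_⟩, ?_⟩
    · simpa [RC2_zero] using hA 0 (by rw [hA2]; decide)
    · simpa [RC2_one] using hA 1 (by rw [hA2]; decide)
    · intro j k hjk hk
      have := hT2 j k hjk (by rw [hbi]; exact hk)
      rwa [hbi] at this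
    · refine triple_ext hA2 hG ?_
      funext p
      rcases p with _ | _ | p
      · rfl
      · rfl
      · rw [hnorm _ (by simp), eTr_two (by simp)]
  · rintro ⟨S0, S1, h, rfl⟩
    exact isEdge_mkE h

lemma isVert_mkV0 (h : VData m n T0 T1) : IsVert m n (mkV0 T0 T1) := by
  obtain ⟨h00, h01, hc0, hc1, hdc, hsup⟩ := h
  have hun : ({0} : Finset ℕ) ∪ {1} = {0, 1} := pair_union
  unfold IsVert IsSimplexOf IsWS IsPre mkV0
  simp only
  refine ⟨⟨⟨⟨?_, ?_, ?_⟩, ?_⟩, ?_, ?_, ?_⟩, ?_, ?_⟩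
  · simp
  · intro p hp
    rw [hun] at hp
    simp only [Finset.mem_insert, Finset.mem_singleton] at hp
    rcases hp with rfl | rfl
    · simpa [eTr] using h00
    · simpa [eTr] using h01
  · intro j k hjk hk
    rw [hun, biUnion_pair] at hk ⊢
    exact hdc hjk (by simpa [eTr] using hk)
  · intro k hk
    rw [hun, biUnion_pair] at hk
    simp only [eTr] at hk
    norm_num at hk
    rcases hk with h | h
    · exact Or.inr ⟨0, by rw [hun]; decide, by simpa [eTr] using h,
        fun hc => by simpa using hc.1⟩
    · rcases eq_or_ne (T1.sup id) k with he | hne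
      · exact Or.inr ⟨0, by rw [hun]; decide, by simpa [eTr] using (he ▸ hsup),
          fun hc => by simpa using hc.1⟩
      · exact Or.inr ⟨1, by rw [hun]; decide, by simpa [eTr] using h,
          fun hc => hne (by simpa [eTr] using hc.2)⟩
  · rw [hun, range_two]
  · intro p hp
    rw [Finset.mem_singleton] at hp
    subst hp
    simpa [eTr, RC2_zero] using hc0
  · intro p hp
    rw [Finset.mem_singleton] at hp
    subst hp
    simpa [eTr, RC2_one] using hc1
  · decide
  · exact fun p hp => eTr_two hp

lemma isVert_mkV1 (h : VData n m T1 T0) : IsVert m n (mkV1 T0 T1) := by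
  obtain ⟨h11, h10, hc1, hc0, hdc, hsup⟩ := h
  have hun : ({1} : Finset ℕ) ∪ {0} = {0, 1} := by decide
  rw [mkV1, eTr1_eq]
  unfold IsVert IsSimplexOf IsWS IsPre
  simp only
  refine ⟨⟨⟨⟨?_, ?_, ?_⟩, ?_⟩, ?_, ?_, ?_⟩, ?_, ?_⟩
  · simp
  · intro p hp
    rw [hun] at hp
    simp only [Finset.mem_insert, Finset.mem_singleton] at hp
    rcases hp with rfl | rfl
    · simpa [eTr] using h10
    · simpa [eTr] using h11
  · intro j k hjk hk
    rw [hun, biUnion_pair] at hk ⊢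
    simp only [eTr] at hk ⊢
    norm_num at hk ⊢
    have hk' : k ∈ T1 ∪ T0 := Finset.mem_union.2 hk.symm
    exact (Finset.mem_union.1 (hdc hjk hk')).symm
  · intro k hk
    rw [hun, biUnion_pair] at hk
    simp only [eTr] at hk
    norm_num at hk
    rcases hk with h | h
    · rcases eq_or_ne (T0.sup id) k with he | hne
      · exact Or.inr ⟨1, by rw [hun]; decide, by simpa [eTr] using (he ▸ hsup),
          fun hc => by simpa using hc.1⟩
      · exact Or.inr ⟨0, by rw [hun]; decide, by simpa [eTr] using h,
          fun hc => hne (by simpa [eTr] using hc.2)⟩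
    · exact Or.inr ⟨1, by rw [hun]; decide, by simpa [eTr] using h,
        fun hc => by simpa using hc.1⟩
  · rw [hun, range_two]
  · intro p hp
    rw [Finset.mem_singleton] at hp
    subst hp
    simpa [eTr, RC2_one] using hc1
  · intro p hp
    rw [Finset.mem_singleton] at hp
    subst hp
    simpa [eTr, RC2_zero] using hc0
  · decide
  · exact fun p hp => eTr_two hp

end Char


section Char2

variable {m n : ℕ}

lemma isVert_iff {v : Triple} :
    IsVert m n v ↔ (∃ T0 T1, VData m n T0 T1 ∧ v = mkV0 T0 T1) ∨
      (∃ T0 T1, VData n m T1 T0 ∧ v = mkV1 T0 T1) := by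
  constructor
  · rintro ⟨⟨⟨⟨hdisj, h0, hT2⟩, hTW⟩, hAG, hA, hG⟩, hcard, hnorm⟩
    obtain ⟨a, ha⟩ := Finset.card_eq_one.1 hcard
    have haU : a ∈ (Finset.range 2 : Finset ℕ) := by
      rw [← hAG]
      exact Finset.mem_union_left _ (ha ▸ Finset.mem_singleton_self a)
    have hGe : v.2.1 = Finset.range 2 \ {a} := by
      rw [← hAG, ← ha]
      exact (Finset.union_sdiff_cancel_left hdisj).symm
    have hbi : (v.1 ∪ v.2.1).biUnion v.2.2 = v.2.2 0 ∪ v.2.2 1 := by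
      rw [hAG, range_two, biUnion_pair]
    have h00 : 0 ∈ v.2.2 0 := h0 0 (by rw [hAG]; decide)
    have h01 : 0 ∈ v.2.2 1 := h0 1 (by rw [hAG]; decide)
    have hdc : DC (v.2.2 0 ∪ v.2.2 1) := by
      intro j k hjk hk
      have := hT2 j k hjk (by rw [hbi]; exact hk)
      rwa [hbi] at this
    rw [range_two] at haU
    simp only [Finset.mem_insert, Finset.mem_singleton] at haU
    rcases haU with rfl | rfl
    · have hG1 : v.2.1 = {1} := by rw [hGe]; decide
      refine Or.inl ⟨v.2.2 0, v.2.2 1, ⟨h00, h01, ?_, ?_, hdc, ?_⟩, ?_⟩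
      · simpa [RC2_zero] using hA 0 (ha ▸ Finset.mem_singleton_self 0)
      · simpa [RC2_one] using hG 1 (hG1 ▸ Finset.mem_singleton_self 1)
      · have hmem : (v.2.2 1).sup id ∈ (v.1 ∪ v.2.1).biUnion v.2.2 := by
          rw [hbi]
          exact Finset.mem_union_right _ (supid_mem ⟨0, h01⟩)
        rcases hTW _ hmem with he | ⟨p, hp, hk, hng⟩
        · exact he ▸ h00
        · rw [hAG, range_two] at hp
          simp only [Finset.mem_insert, Finset.mem_singleton] at hp
          rcases hp with rfl | rfl
          · exact hk
          · exact absurd ⟨hG1 ▸ Finset.mem_singleton_self 1, rfl⟩ hng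
      · refine triple_ext ha hG1 ?_
        funext p
        rcases p with _ | _ | p
        · rfl
        · rfl
        · rw [hnorm _ (by simp), eTr_two (by simp)]
    · have hG1 : v.2.1 = {0} := by rw [hGe]; decide
      refine Or.inr ⟨v.2.2 0, v.2.2 1, ⟨h01, h00, ?_, ?_, ?_, ?_⟩, ?_⟩
      · simpa [RC2_one] using hA 1 (ha ▸ Finset.mem_singleton_self 1)
      · simpa [RC2_zero] using hG 0 (hG1 ▸ Finset.mem_singleton_self 0)
      · intro j k hjk hk
        have hk' : k ∈ v.2.2 0 ∪ v.2.2 1 := Finset.mem_union.2 (Finset.mem_union.1 hk).symm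
        exact Finset.mem_union.2 (Finset.mem_union.1 (hdc hjk hk')).symm
      · have hmem : (v.2.2 0).sup id ∈ (v.1 ∪ v.2.1).biUnion v.2.2 := by
          rw [hbi]
          exact Finset.mem_union_left _ (supid_mem ⟨0, h00⟩)
        rcases hTW _ hmem with he | ⟨p, hp, hk, hng⟩
        · rw [he]; exact h01
        · rw [hAG, range_two] at hp
          simp only [Finset.mem_insert, Finset.mem_singleton] at hp
          rcases hp with rfl | rfl
          · exact absurd ⟨hG1 ▸ Finset.mem_singleton_self 0, rfl⟩ hng
          · exact hk
      · refine triple_ext ha hG1 ?_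
        funext p
        rcases p with _ | _ | p
        · rfl
        · rfl
        · rw [hnorm _ (by simp)]
          simp [eTr1]
  · rintro (⟨T0, T1, h, rfl⟩ | ⟨T0, T1, h, rfl⟩)
    · exact isVert_mkV0 h
    · exact isVert_mkV1 h

end Char2


section EdgesAtVertex

variable {m n : ℕ} {T0 T1 S0 S1 : Finset ℕ}

/-- the type-A edge at an active-0 vertex -/
noncomputable def eA (n : ℕ) (T0 T1 : Finset ℕ) : Triple :=
  mkE T0 (T1 ∪ Finset.Ico (T0.sup id + 1) (T0.sup id + n + 2 - T1.card))

def shiftge (d : ℕ) : ℕ → ℕ := fun x => if x < d then x else x + 1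

/-- the type-B edge at an active-0 vertex -/
noncomputable def eB (n : ℕ) (T0 T1 : Finset ℕ) : Triple :=
  mkE (T0.image (shiftge (T1.sup id)))
    (T1 ∪ Finset.Ico (T0.sup id + 2) (T0.sup id + n + 3 - T1.card))

lemma shiftge_inj (d : ℕ) : Function.Injective (shiftge d) := by
  intro x y h
  unfold shiftge at h
  split_ifs at h <;> omega

lemma clps_shiftge (d x : ℕ) : clps d (shiftge d x) = x := by
  unfold clps shiftge
  split_ifs <;> omega

lemma shiftge_clps {d x : ℕ} (hx : x ≠ d) : shiftge d (clps d x) = x := by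
  unfold clps shiftge
  split_ifs <;> omega

lemma DC_range (N : ℕ) : DC (Finset.range N) := fun j k hjk hk =>
  Finset.mem_range.2 (lt_of_le_of_lt hjk (Finset.mem_range.1 hk))

lemma VData.d_le_T (hV : VData m n T0 T1) : T1.sup id ≤ T0.sup id :=
  le_supid hV.2.2.2.2.2

lemma VData.c_le (hV : VData m n T0 T1) : T1.card ≤ n + 1 := hV.2.2.2.1

lemma VData.union_eq (hV : VData m n T0 T1) :
    T0 ∪ T1 = Finset.range (T0.sup id + 1) := by
  obtain ⟨h00, h01, hc0, hc1, hdc, hsup⟩ := hV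
  ext x
  simp only [Finset.mem_union, Finset.mem_range]
  constructor
  · rintro (h | h)
    · exact Nat.lt_succ_of_le (le_supid h)
    · exact Nat.lt_succ_of_le (le_trans (le_supid h) (le_supid hsup))
  · intro hx
    exact Finset.mem_union.1
      (hdc (Nat.lt_succ_iff.1 hx) (Finset.mem_union_left _ (supid_mem ⟨0, h00⟩)))

lemma pair_sdiff0 : ({0, 1} : Finset ℕ) \ {0} = {1} := by decide

lemma incTo_of_ghost (hg : ghostTr {0, 1} ∅ {1} (eTr S0 S1) = eTr T0 T1) :
    IncTo (mkE S0 S1) (mkV0 T0 T1) := by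
  refine ⟨0, ?_, rfl, ?_, ?_⟩
  · show (0 : ℕ) ∈ ({0, 1} : Finset ℕ)
    decide
  · show ({1} : Finset ℕ) = ∅ ∪ (({0, 1} : Finset ℕ) \ {0})
    decide
  · intro q _
    show eTr T0 T1 q = ghostTr {0, 1} ∅ (({0, 1} : Finset ℕ) \ {0}) (eTr S0 S1) q
    rw [pair_sdiff0, hg]

lemma EData_eA (hV : VData m n T0 T1) :
    EData m n T0 (T1 ∪ Finset.Ico (T0.sup id + 1) (T0.sup id + n + 2 - T1.card)) := by
  obtain ⟨h00, h01, hc0, hc1, hdc, hsup⟩ := hV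
  have hdT := le_supid hsup
  have hdisj : Disjoint T1 (Finset.Ico (T0.sup id + 1) (T0.sup id + n + 2 - T1.card)) := by
    rw [Finset.disjoint_left]
    intro a ha hb
    rw [Finset.mem_Ico] at hb
    have := le_trans (le_supid ha) hdT
    omega
  refine ⟨h00, Finset.mem_union_left _ h01, hc0, ?_, ?_⟩
  · rw [Finset.card_union_of_disjoint hdisj, Nat.card_Ico]
    omega
  · have hU : T0 ∪ (T1 ∪ Finset.Ico (T0.sup id + 1) (T0.sup id + n + 2 - T1.card)) =
        Finset.range (T0.sup id + n + 2 - T1.card) := by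
      ext x
      simp only [Finset.mem_union, Finset.mem_Ico, Finset.mem_range]
      constructor
      · rintro (h | h | h)
        · have := le_supid h; omega
        · have := le_trans (le_supid h) hdT; omega
        · omega
      · intro hx
        by_cases hxT : x ≤ T0.sup id
        · have : x ∈ T0 ∪ T1 := by
            rw [VData.union_eq ⟨h00, h01, hc0, hc1, hdc, hsup⟩]
            exact Finset.mem_range.2 (by omega)
          rcases Finset.mem_union.1 this with h | h
          · exact Or.inl h
          · exact Or.inr (Or.inl h)
        · exact Or.inr (Or.inr ⟨by omega, hx⟩)
    rw [hU]
    exact DC_range _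

lemma trunc_eA (hV : VData m n T0 T1) :
    trunc T0 (T1 ∪ Finset.Ico (T0.sup id + 1) (T0.sup id + n + 2 - T1.card)) = T1 := by
  have hdT := hV.d_le_T
  ext x
  simp only [trunc, Finset.mem_inter, Finset.mem_union, Finset.mem_Ico, Finset.mem_range]
  constructor
  · rintro ⟨h | h, hx⟩
    · exact h
    · omega
  · intro hx
    exact ⟨Or.inl hx, by have := le_trans (le_supid hx) hdT; omega⟩

lemma ghost_eA (hV : VData m n T0 T1) :
    ghostTr {0, 1} ∅ {1} ((eA n T0 T1).2.2) = eTr T0 T1 := by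
  have hE := EData_eA hV
  have h := ghost1_eval_case1 hE.2.2.2.2 hE.1 hE.2.1 (by rw [trunc_eA hV]; exact hV.2.2.2.2.2)
  rw [trunc_eA hV] at h
  exact h

lemma incTo_eA (hV : VData m n T0 T1) : IncTo (eA n T0 T1) (mkV0 T0 T1) :=
  incTo_of_ghost (ghost_eA hV)

lemma zero_lt_d (hV : VData m n T0 T1) (hd : T1.sup id ≠ 0) : 0 < T1.sup id :=
  Nat.pos_of_ne_zero hd

lemma mem_image_shiftge_iff (hV : VData m n T0 T1) {x : ℕ} :
    x ∈ T0.image (shiftge (T1.sup id)) ↔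
      (x < T1.sup id ∧ x ∈ T0) ∨ (T1.sup id < x ∧ x - 1 ∈ T0) := by
  simp only [Finset.mem_image]
  constructor
  · rintro ⟨y, hy, rfl⟩
    unfold shiftge
    split_ifs with h
    · exact Or.inl ⟨h, hy⟩
    · exact Or.inr ⟨by omega, by simpa using hy⟩
  · rintro (⟨h1, h2⟩ | ⟨h1, h2⟩)
    · exact ⟨x, h2, by unfold shiftge; rw [if_pos h1]⟩
    · exact ⟨x - 1, h2, by unfold shiftge; rw [if_neg (by omega)]; omega⟩

lemma d_not_mem_image (hV : VData m n T0 T1) :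
    T1.sup id ∉ T0.image (shiftge (T1.sup id)) := by
  rw [mem_image_shiftge_iff hV]
  rintro (⟨h, _⟩ | ⟨h, _⟩) <;> omega

lemma sup_image_shiftge (hV : VData m n T0 T1) :
    (T0.image (shiftge (T1.sup id))).sup id = T0.sup id + 1 := by
  have hdT := hV.d_le_T
  apply le_antisymm
  · apply Finset.sup_le
    intro y hy
    rcases (mem_image_shiftge_iff hV).1 hy with ⟨_, h⟩ | ⟨h1, h⟩
    · have := le_supid h; simp only [id]; omega
    · have := le_supid h; simp only [id]; omega
  · have hT : T0.sup id + 1 ∈ T0.image (shiftge (T1.sup id)) := by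
      refine Finset.mem_image.2 ⟨T0.sup id, supid_mem ⟨0, hV.1⟩, ?_⟩
      unfold shiftge
      rw [if_neg (by omega)]
    exact le_supid hT

lemma EData_eB (hV : VData m n T0 T1) (hd : T1.sup id ≠ 0) :
    EData m n (T0.image (shiftge (T1.sup id)))
      (T1 ∪ Finset.Ico (T0.sup id + 2) (T0.sup id + n + 3 - T1.card)) := by
  obtain ⟨h00, h01, hc0, hc1, hdc, hsup⟩ := hV
  have hV' : VData m n T0 T1 := ⟨h00, h01, hc0, hc1, hdc, hsup⟩
  have hdT := hV'.d_le_T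
  have hdisj : Disjoint T1 (Finset.Ico (T0.sup id + 2) (T0.sup id + n + 3 - T1.card)) := by
    rw [Finset.disjoint_left]
    intro a ha hb
    rw [Finset.mem_Ico] at hb
    have := le_trans (le_supid ha) hdT
    omega
  refine ⟨?_, Finset.mem_union_left _ h01, ?_, ?_, ?_⟩
  · exact Finset.mem_image.2 ⟨0, h00, by unfold shiftge; rw [if_pos (by omega)]⟩
  · rw [Finset.card_image_of_injective _ (shiftge_inj _)]
    exact hc0
  · rw [Finset.card_union_of_disjoint hdisj, Nat.card_Ico]
    omega
  · have hU : T0.image (shiftge (T1.sup id)) ∪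
        (T1 ∪ Finset.Ico (T0.sup id + 2) (T0.sup id + n + 3 - T1.card)) =
        Finset.range (T0.sup id + n + 3 - T1.card) := by
      ext x
      simp only [Finset.mem_union, Finset.mem_Ico, Finset.mem_range]
      constructor
      · rintro (h | h | h)
        · rcases (mem_image_shiftge_iff hV').1 h with ⟨_, h2⟩ | ⟨_, h2⟩ <;>
            (have := le_supid h2; omega)
        · have := le_trans (le_supid h) hdT; omega
        · omega
      · intro hx
        rcases lt_trichotomy x (T1.sup id) with hlt | rfl | hgt
        · have hx' : x ∈ T0 ∪ T1 := by
            rw [hV'.union_eq]; exact Finset.mem_range.2 (by omega)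
          rcases Finset.mem_union.1 hx' with h | h
          · exact Or.inl ((mem_image_shiftge_iff hV').2 (Or.inl ⟨hlt, h⟩))
          · exact Or.inr (Or.inl h)
        · exact Or.inr (Or.inl (supid_mem ⟨0, h01⟩))
        · by_cases hxT : x ≤ T0.sup id + 1
          · left
            rw [mem_image_shiftge_iff hV']
            right
            refine ⟨hgt, ?_⟩
            have : x - 1 ∈ T0 ∪ T1 := by
              rw [hV'.union_eq]; exact Finset.mem_range.2 (by omega)
            rcases Finset.mem_union.1 this with h | h
            · exact h
            · have hle := le_supid h
              have hxd : x - 1 = T1.sup id := by omega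
              rw [hxd]; exact hsup
          · exact Or.inr (Or.inr ⟨by omega, hx⟩)
    rw [hU]
    exact DC_range _

lemma trunc_eB (hV : VData m n T0 T1) :
    trunc (T0.image (shiftge (T1.sup id)))
      (T1 ∪ Finset.Ico (T0.sup id + 2) (T0.sup id + n + 3 - T1.card)) = T1 := by
  have hdT := hV.d_le_T
  rw [trunc, sup_image_shiftge hV]
  ext x
  simp only [Finset.mem_inter, Finset.mem_union, Finset.mem_Ico, Finset.mem_range]
  constructor
  · rintro ⟨h | h, hx⟩
    · exact h
    · omega
  · intro hx
    exact ⟨Or.inl hx, by have := le_trans (le_supid hx) hdT; omega⟩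

lemma ghost_eB (hV : VData m n T0 T1) (hd : T1.sup id ≠ 0) :
    ghostTr {0, 1} ∅ {1} ((eB n T0 T1).2.2) = eTr T0 T1 := by
  have hE := EData_eB hV hd
  have h := ghost1_eval_case2 hE.2.2.2.2 hE.1 hE.2.1
    (by rw [trunc_eB hV]; exact d_not_mem_image hV)
  rw [trunc_eB hV] at h
  show ghostTr {0, 1} ∅ {1}
      (eTr (T0.image (shiftge (T1.sup id)))
        (T1 ∪ Finset.Ico (T0.sup id + 2) (T0.sup id + n + 3 - T1.card))) = eTr T0 T1
  rw [h, Finset.image_image]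
  have hcomp : clps (T1.sup id) ∘ shiftge (T1.sup id) = id := funext (clps_shiftge _)
  rw [hcomp, Finset.image_id]

lemma incTo_eB (hV : VData m n T0 T1) (hd : T1.sup id ≠ 0) :
    IncTo (eB n T0 T1) (mkV0 T0 T1) :=
  incTo_of_ghost (ghost_eB hV hd)

end EdgesAtVertex


section Incidence

variable {m n : ℕ} {T0 T1 S0 S1 : Finset ℕ}

lemma trunc_subset : trunc S0 S1 ⊆ S1 := Finset.inter_subset_left

lemma S1_decomp (hED : EData m n S0 S1) :
    S1 = trunc S0 S1 ∪ Finset.Ico (S0.sup id + 1)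
      (S0.sup id + n + 2 - (trunc S0 S1).card) := by
  obtain ⟨h00, h01, hc0, hc1, hdc⟩ := hED
  set q := S0.sup id with hq
  set u := (S0 ∪ S1).sup id with hu
  have hqu : q ≤ u := le_supid (Finset.mem_union_left _ (supid_mem ⟨0, h00⟩))
  have hkey : S1 = trunc S0 S1 ∪ Finset.Ico (q + 1) (u + 1) := by
    ext x
    simp only [Finset.mem_union, trunc, Finset.mem_inter, Finset.mem_range, Finset.mem_Ico]
    constructor
    · intro hx
      by_cases hxq : x ≤ q
      · exact Or.inl ⟨hx, by omega⟩
      · exact Or.inr ⟨by omega,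
          Nat.lt_succ_of_le (le_supid (Finset.mem_union_right _ hx))⟩
    · rintro (⟨hx, _⟩ | ⟨h1, h2⟩)
      · exact hx
      · have hx : x ∈ S0 ∪ S1 :=
          hdc (Nat.lt_succ_iff.1 h2) (supid_mem ⟨0, Finset.mem_union_left _ h00⟩)
        rcases Finset.mem_union.1 hx with h | h
        · exact absurd (le_supid h) (by omega)
        · exact h
  have hdisj : Disjoint (trunc S0 S1) (Finset.Ico (q + 1) (u + 1)) := by
    rw [Finset.disjoint_left]
    intro a ha hb
    have h1 := Finset.mem_range.1 (Finset.mem_inter.1 ha).2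
    rw [Finset.mem_Ico] at hb
    omega
  have hcard : n + 1 = (trunc S0 S1).card + (u - q) := by
    have hc := congrArg Finset.card hkey
    rw [Finset.card_union_of_disjoint hdisj, Nat.card_Ico, hc1] at hc
    omega
  have huq : u + 1 = q + n + 2 - (trunc S0 S1).card := by omega
  conv_lhs => rw [hkey]
  rw [huq]

lemma mkE_inj {S0' S1' : Finset ℕ} (h : mkE S0 S1 = mkE S0' S1') :
    S0 = S0' ∧ S1 = S1' := by
  have h2 := congrFun (congrArg (fun t : Triple => t.2.2) h)
  exact ⟨h2 0, h2 1⟩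

lemma incident_eq (hV : VData m n T0 T1) {e : Triple} (hE : IsEdge m n e)
    (hI : IncTo e (mkV0 T0 T1)) :
    e = eA n T0 T1 ∨ (T1.sup id ≠ 0 ∧ e = eB n T0 T1) := by
  obtain ⟨S0, S1, hED, rfl⟩ := isEdge_iff.1 hE
  obtain ⟨p, hp, hv1, hv2, hv3⟩ := hI
  have hp0 : p = 0 := by
    have h0p : ({0} : Finset ℕ) = {p} := hv1
    exact (Finset.singleton_injective h0p).symm
  subst hp0
  have htr : ∀ q ∈ Finset.range 2,
      eTr T0 T1 q = ghostTr {0, 1} ∅ {1} (eTr S0 S1) q := by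
    intro q hq
    have := hv3 q hq
    rwa [show (mkE S0 S1).1 \ {0} = {1} from pair_sdiff0] at this
  obtain ⟨h00, h01, hc0, hc1, hdc⟩ := hED
  have hED' : EData m n S0 S1 := ⟨h00, h01, hc0, hc1, hdc⟩
  by_cases hb : (trunc S0 S1).sup id ∈ S0
  · left
    have hg := ghost1_eval_case1 hdc h00 h01 hb
    have hT0 : T0 = S0 := by have := htr 0 (by decide); rwa [hg] at this
    have hT1 : T1 = trunc S0 S1 := by have := htr 1 (by decide); rwa [hg] at this
    rw [eA, ← hT0]
    have hS1 := S1_decomp hED'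
    rw [← hT1, ← hT0] at hS1
    rw [← hS1]
  · right
    have hg := ghost1_eval_case2 hdc h00 h01 hb
    set b := (trunc S0 S1).sup id with hbdef
    have hT0 : T0 = S0.image (clps b) := by have := htr 0 (by decide); rwa [hg] at this
    have hT1 : T1 = trunc S0 S1 := by have := htr 1 (by decide); rwa [hg] at this
    have hd : T1.sup id = b := by rw [hT1]
    have hbne : b ≠ 0 := fun h => hb (h ▸ h00)
    have hbq : b < S0.sup id := by
      have h1 : b ≤ S0.sup id := by
        have : b ∈ trunc S0 S1 := supid_mem ⟨0, zero_mem_trunc h01⟩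
        exact Nat.lt_succ_iff.1 (Finset.mem_range.1 (Finset.mem_inter.1 this).2)
      rcases lt_or_eq_of_le h1 with h | h
      · exact h
      · exact absurd (h ▸ supid_mem ⟨0, h00⟩) hb
    have hS0 : S0 = T0.image (shiftge (T1.sup id)) := by
      rw [hd, hT0, Finset.image_image]
      have : ∀ x ∈ S0, (shiftge b ∘ clps b) x = id x := by
        intro x hx
        exact shiftge_clps (fun h => hb (h ▸ hx))
      rw [Finset.image_congr this, Finset.image_id]
    have hsupT0 : T0.sup id = S0.sup id - 1 := by
      rw [hT0]
      apply le_antisymm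
      · apply Finset.sup_le
        intro y hy
        obtain ⟨x, hx, rfl⟩ := Finset.mem_image.1 hy
        have hxq := le_supid hx
        simp only [id, clps]
        split_ifs <;> omega
      · have : clps b (S0.sup id) = S0.sup id - 1 := by
          unfold clps
          rw [if_neg (by omega)]
        exact this ▸ le_supid (Finset.mem_image_of_mem _ (supid_mem ⟨0, h00⟩))
    refine ⟨hd ▸ hbne, ?_⟩
    rw [eB, ← hS0]
    have hS1 := S1_decomp hED'
    rw [← hT1] at hS1
    have hIco : Finset.Ico (S0.sup id + 1) (S0.sup id + n + 2 - T1.card) =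
        Finset.Ico (T0.sup id + 2) (T0.sup id + n + 3 - T1.card) := by
      rw [hsupT0]
      congr 1 <;> omega
    rw [hIco] at hS1
    rw [← hS1]

lemma isEdge_eA (hV : VData m n T0 T1) : IsEdge m n (eA n T0 T1) :=
  isEdge_mkE (EData_eA hV)

lemma isEdge_eB (hV : VData m n T0 T1) (hd : T1.sup id ≠ 0) : IsEdge m n (eB n T0 T1) :=
  isEdge_mkE (EData_eB hV hd)

lemma eA_ne_eB (hV : VData m n T0 T1) : eA n T0 T1 ≠ eB n T0 T1 := by
  intro h
  have := (mkE_inj h).1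
  exact d_not_mem_image hV (this ▸ hV.2.2.2.2.2)

lemma incident_set (hV : VData m n T0 T1) :
    {e : Triple | IsEdge m n e ∧ IncTo e (mkV0 T0 T1)} =
      (if T1.sup id = 0 then {eA n T0 T1} else {eA n T0 T1, eB n T0 T1} : Set Triple) := by
  ext e
  simp only [Set.mem_setOf_eq]
  split_ifs with hd
  · simp only [Set.mem_singleton_iff]
    constructor
    · rintro ⟨hE, hI⟩
      rcases incident_eq hV hE hI with h | ⟨hd', _⟩
      · exact h
      · exact absurd hd hd'
    · rintro rfl
      exact ⟨isEdge_eA hV, incTo_eA hV⟩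
  · simp only [Set.mem_insert_iff, Set.mem_singleton_iff]
    constructor
    · rintro ⟨hE, hI⟩
      rcases incident_eq hV hE hI with h | ⟨_, h⟩
      · exact Or.inl h
      · exact Or.inr h
    · rintro (rfl | rfl)
      · exact ⟨isEdge_eA hV, incTo_eA hV⟩
      · exact ⟨isEdge_eB hV hd, incTo_eB hV hd⟩

lemma count_active0 (hV : VData m n T0 T1) :
    Nat.card {e : Triple // IsEdge m n e ∧ IncTo e (mkV0 T0 T1)} =
      if T1.sup id = 0 then 1 else 2 := by
  have h1 : Nat.card {e : Triple // IsEdge m n e ∧ IncTo e (mkV0 T0 T1)} =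
      ({e : Triple | IsEdge m n e ∧ IncTo e (mkV0 T0 T1)} : Set Triple).ncard :=
    Nat.card_coe_set_eq _
  rw [h1, incident_set hV]
  split_ifs with hd
  · exact Set.ncard_singleton _
  · exact Set.ncard_pair (eA_ne_eB hV)

end Incidence


section Swap

variable {m n : ℕ} {A G S T0 T1 S0 S1 : Finset ℕ} {Tr : ℕ → Finset ℕ}

def sw : ℕ → ℕ := fun p => if p = 0 then 1 else if p = 1 then 0 else p

lemma sw_sw (p : ℕ) : sw (sw p) = p := by
  rcases p with _ | _ | p <;> simp [sw]

lemma sw_inj : Function.Injective sw :=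
  Function.LeftInverse.injective sw_sw

/-- swap the roles of processes 0 and 1 -/
def swapT (t : Triple) : Triple :=
  (t.1.image sw, t.2.1.image sw, fun p => t.2.2 (sw p))

lemma image_sw_image_sw (A : Finset ℕ) : (A.image sw).image sw = A := by
  rw [Finset.image_image]
  have h : sw ∘ sw = id := funext sw_sw
  rw [h, Finset.image_id]

lemma swapT_swapT (t : Triple) : swapT (swapT t) = t := by
  obtain ⟨a, g, tr⟩ := t
  unfold swapT
  refine triple_ext ?_ ?_ ?_ <;> simp only
  · exact image_sw_image_sw a
  · exact image_sw_image_sw g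
  · funext p
    rw [sw_sw]

lemma mem_image_sw {a : ℕ} : sw a ∈ G.image sw ↔ a ∈ G := by
  constructor
  · intro h
    obtain ⟨b, hb, hba⟩ := Finset.mem_image.1 h
    rwa [← sw_inj hba]
  · exact Finset.mem_image_of_mem _

lemma biUnion_sw : (A.image sw).biUnion (fun p => Tr (sw p)) = A.biUnion Tr := by
  rw [Finset.image_biUnion]
  exact Finset.biUnion_congr rfl (fun a _ => by rw [sw_sw])

lemma stabQ_sw : stabQ (A.image sw) (S.image sw) (fun p => Tr (sw p)) = stabQ A S Tr := by
  unfold stabQ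
  rcases eq_or_ne S A with rfl | hne
  · rw [if_pos rfl, if_pos rfl]
  · rw [if_neg hne, if_neg (fun h => hne (by
      have := congrArg (Finset.image sw) h
      rwa [image_sw_image_sw, image_sw_image_sw] at this))]
    rw [← Finset.image_sdiff _ _ sw_inj, biUnion_sw]

lemma surv_sw {k : ℕ} :
    Surv (A.image sw) (G.image sw) (fun p => Tr (sw p)) k ↔ Surv A G Tr k := by
  unfold Surv
  apply or_congr Iff.rfl
  constructor
  · rintro ⟨p, hp, hk, hng⟩
    rw [← Finset.image_union] at hp
    obtain ⟨p0, hp0, rfl⟩ := Finset.mem_image.1 hp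
    simp only [sw_sw] at hk hng
    exact ⟨p0, hp0, hk, fun ⟨hg, hs⟩ => hng ⟨Finset.mem_image_of_mem _ hg, hs⟩⟩
  · rintro ⟨p, hp, hk, hng⟩
    refine ⟨sw p, by rw [← Finset.image_union]; exact Finset.mem_image_of_mem _ hp, ?_, ?_⟩
    · simp only [sw_sw]
      exact hk
    · simp only [sw_sw]
      exact fun ⟨hg, hs⟩ => hng ⟨mem_image_sw.1 hg, hs⟩

lemma collapse_sw :
    collapse (A.image sw) (G.image sw) (fun p => Tr (sw p)) = collapse A G Tr := by
  funext j
  unfold collapse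
  congr 1
  exact Finset.filter_congr (fun i _ => surv_sw)

lemma stabTr_sw (x : ℕ) :
    stabTr (A.image sw) (S.image sw) (fun p => Tr (sw p)) x = stabTr A S Tr (sw x) := by
  unfold stabTr
  rw [stabQ_sw]

lemma ghostTr_sw (x : ℕ) :
    ghostTr (A.image sw) (G.image sw) (S.image sw) (fun p => Tr (sw p)) x =
      ghostTr A G S Tr (sw x) := by
  unfold ghostTr canonTr
  have h1 : stabTr (A.image sw) (S.image sw) (fun p => Tr (sw p)) x =
      stabTr A S Tr (sw x) := stabTr_sw x
  rw [h1]
  congr 1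
  have h2 : A.image sw \ S.image sw = (A \ S).image sw :=
    (Finset.image_sdiff _ _ sw_inj).symm
  have h3 : G.image sw ∪ S.image sw = (G ∪ S).image sw :=
    (Finset.image_union _ _).symm
  rw [h2, h3]
  have h4 : (fun p => stabTr A S Tr (sw p)) =
      stabTr (A.image sw) (S.image sw) (fun p => Tr (sw p)) := by
    funext p
    rw [stabTr_sw]
  rw [← h4, collapse_sw]

lemma swapT_mkE : swapT (mkE S0 S1) = mkE S1 S0 := by
  unfold swapT mkE
  refine triple_ext ?_ ?_ ?_ <;> simp only
  · decide
  · decide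
  · funext p
    rcases p with _ | _ | p <;> simp [eTr, sw]

lemma swapT_mkV0 : swapT (mkV0 T0 T1) = mkV1 T1 T0 := by
  unfold swapT mkV0 mkV1
  refine triple_ext ?_ ?_ ?_ <;> simp only
  · decide
  · decide
  · funext p
    rcases p with _ | _ | p <;> simp [eTr, eTr1, sw]

lemma swapT_mkV1 : swapT (mkV1 T0 T1) = mkV0 T1 T0 := by
  have h := congrArg swapT (swapT_mkV0 (T0 := T1) (T1 := T0))
  rw [swapT_swapT] at h
  exact h.symm

lemma isEdge_swapT {e : Triple} (h : IsEdge m n e) : IsEdge n m (swapT e) := by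
  obtain ⟨S0, S1, ⟨h00, h01, hc0, hc1, hdc⟩, rfl⟩ := isEdge_iff.1 h
  rw [swapT_mkE]
  exact isEdge_mkE ⟨h01, h00, hc1, hc0, by rwa [Finset.union_comm]⟩

lemma sw_mem_range2 {q : ℕ} (h : q ∈ Finset.range 2) : sw q ∈ Finset.range 2 := by
  rw [range_two] at h ⊢
  fin_cases h <;> decide

lemma incTo_swapT {e v : Triple} (h : IncTo e v) : IncTo (swapT e) (swapT v) := by
  obtain ⟨p, hp, h1, h2, h3⟩ := h
  refine ⟨sw p, Finset.mem_image_of_mem _ hp, ?_, ?_, ?_⟩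
  · show v.1.image sw = {sw p}
    rw [h1, Finset.image_singleton]
  · show v.2.1.image sw = e.2.1.image sw ∪ (e.1.image sw \ {sw p})
    rw [h2, Finset.image_union, Finset.image_sdiff _ _ sw_inj, Finset.image_singleton]
  · intro q hq
    show v.2.2 (sw q) = ghostTr (e.1.image sw) (e.2.1.image sw)
      (e.1.image sw \ {sw p}) (fun r => e.2.2 (sw r)) q
    rw [show e.1.image sw \ {sw p} = (e.1 \ {p}).image sw from
        by rw [Finset.image_sdiff _ _ sw_inj, Finset.image_singleton]]
    rw [ghostTr_sw]
    exact h3 (sw q) (sw_mem_range2 hq)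

lemma count_active1 (hV : VData n m T1 T0) :
    Nat.card {e : Triple // IsEdge m n e ∧ IncTo e (mkV1 T0 T1)} =
      if T0.sup id = 0 then 1 else 2 := by
  have hEquiv : {e : Triple // IsEdge m n e ∧ IncTo e (mkV1 T0 T1)} ≃
      {e : Triple // IsEdge n m e ∧ IncTo e (mkV0 T1 T0)} := by
    refine ⟨fun e => ⟨swapT e.1, isEdge_swapT e.2.1, ?_⟩,
      fun e => ⟨swapT e.1, ?_, ?_⟩, ?_, ?_⟩
    · have := incTo_swapT e.2.2
      rwa [swapT_mkV1] at this
    · have := isEdge_swapT e.2.1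
      exact this
    · have := incTo_swapT e.2.2
      rwa [swapT_mkV0] at this
    · intro e
      exact Subtype.ext (swapT_swapT e.1)
    · intro e
      exact Subtype.ext (swapT_swapT e.1)
  rw [Nat.card_congr hEquiv]
  exact count_active0 hV

end Swap


section Degrees

variable {m n : ℕ} {T0 T1 : Finset ℕ}

lemma VData_v0 : VData m n (Finset.range (m + 1)) {0} := by
  refine ⟨Finset.mem_range.2 (by omega), Finset.mem_singleton_self 0, Finset.card_range _,
    by simp, ?_, ?_⟩
  · have : Finset.range (m + 1) ∪ {0} = Finset.range (m + 1) := by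
      apply Finset.union_eq_left.2
      intro x hx
      rw [Finset.mem_singleton] at hx
      subst hx
      exact Finset.mem_range.2 (by omega)
    rw [this]
    exact DC_range _
  · rw [Finset.sup_singleton]
    exact Finset.mem_range.2 (Nat.succ_pos m)

lemma sup_singleton_zero : ({0} : Finset ℕ).sup id = 0 := by
  rw [Finset.sup_singleton]
  rfl

lemma d_zero_vertex (hV : VData m n T0 T1) (hd : T1.sup id = 0) :
    T0 = Finset.range (m + 1) ∧ T1 = {0} := by
  obtain ⟨h00, h01, hc0, hc1, hdc, hsup⟩ := hV
  have hV' : VData m n T0 T1 := ⟨h00, h01, hc0, hc1, hdc, hsup⟩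
  have hT1 : T1 = {0} := by
    apply Finset.eq_singleton_iff_unique_mem.2
    refine ⟨h01, fun x hx => ?_⟩
    have := le_supid hx
    omega
  have hT0 : T0 = Finset.range (T0.sup id + 1) := by
    have hu := hV'.union_eq
    rwa [hT1, Finset.union_eq_left.2 (by
      intro x hx
      rw [Finset.mem_singleton] at hx
      exact hx ▸ h00)] at hu
  have hsupm : T0.sup id = m := by
    have := congrArg Finset.card hT0
    rw [hc0, Finset.card_range] at this
    omega
  exact ⟨by rw [hT0, hsupm], hT1⟩

lemma mkV0_inj {T0' T1' : Finset ℕ} (h : mkV0 T0 T1 = mkV0 T0' T1') :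
    T0 = T0' ∧ T1 = T1' := by
  have h2 := congrFun (congrArg (fun t : Triple => t.2.2) h)
  exact ⟨h2 0, h2 1⟩

lemma mkV1_inj {T0' T1' : Finset ℕ} (h : mkV1 T0 T1 = mkV1 T0' T1') :
    T0 = T0' ∧ T1 = T1' := by
  have h2 := congrFun (congrArg (fun t : Triple => t.2.2) h)
  exact ⟨h2 0, h2 1⟩

lemma mkV0_ne_mkV1 {T0' T1' : Finset ℕ} : mkV0 T0 T1 ≠ mkV1 T0' T1' := by
  intro h
  have h1 := congrArg (fun t : Triple => t.1) h
  simp only [mkV0, mkV1] at h1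
  exact absurd h1 (by decide)

lemma deg_endpoint0 :
    Nat.card {e : Triple // IsEdge m n e ∧ IncTo e (mkV0 (Finset.range (m + 1)) {0})} = 1 := by
  rw [count_active0 VData_v0, if_pos sup_singleton_zero]

lemma deg_endpoint1 :
    Nat.card {e : Triple // IsEdge m n e ∧ IncTo e (mkV1 {0} (Finset.range (n + 1)))} = 1 := by
  rw [count_active1 VData_v0, if_pos sup_singleton_zero]

lemma deg_interior {v : Triple} (hv : IsVert m n v)
    (h0 : v ≠ mkV0 (Finset.range (m + 1)) {0}) (h1 : v ≠ mkV1 {0} (Finset.range (n + 1))) :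
    Nat.card {e : Triple // IsEdge m n e ∧ IncTo e v} = 2 := by
  rcases isVert_iff.1 hv with ⟨T0, T1, hV, rfl⟩ | ⟨T0, T1, hV, rfl⟩
  · rw [count_active0 hV, if_neg ?_]
    intro hd
    obtain ⟨e0, e1⟩ := d_zero_vertex hV hd
    exact h0 (by rw [e0, e1])
  · rw [count_active1 hV, if_neg ?_]
    intro hd
    obtain ⟨e0, e1⟩ := d_zero_vertex hV hd
    exact h1 (by rw [e0, e1])

end Degrees



section Rho

variable {m n N : ℕ} {S0 S1 S0' S1' T0 T1 : Finset ℕ}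

/-- number of both-columns strictly before `j` (columns start at 1) -/
noncomputable def parB (S0 S1 : Finset ℕ) (j : ℕ) : ℕ :=
  ((S0 ∩ S1) ∩ Finset.Ico 1 j).card

/-- twisted digit of column `j` -/
noncomputable def digit (S0 S1 : Finset ℕ) (j : ℕ) : ℕ :=
  if j ∈ S0 ∧ j ∈ S1 then 1
  else if j ∈ S0 then (if parB S0 S1 j % 2 = 0 then 0 else 2)
  else if j ∈ S1 then (if parB S0 S1 j % 2 = 0 then 2 else 0)
  else 0

/-- the Gray-code rank of an edge -/
noncomputable def rho (N : ℕ) (S0 S1 : Finset ℕ) : ℕ :=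
  ∑ k ∈ Finset.Ico 1 (N + 1), digit S0 S1 k * 3 ^ (N - k)

lemma digit_le (S0 S1 j : ℕ → ℕ → True → True) : True := trivial

lemma digit_le2 : digit S0 S1 N ≤ 2 := by
  unfold digit
  split_ifs <;> omega

lemma parB_congr {j : ℕ}
    (heq : ∀ k, 1 ≤ k → k < j → ((k ∈ S0' ↔ k ∈ S0) ∧ (k ∈ S1' ↔ k ∈ S1))) :
    parB S0' S1' j = parB S0 S1 j := by
  unfold parB
  congr 1
  ext x
  simp only [Finset.mem_inter, Finset.mem_Ico]
  constructor
  · rintro ⟨⟨h0, h1⟩, h2⟩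
    exact ⟨⟨((heq x h2.1 h2.2).1).1 h0, ((heq x h2.1 h2.2).2).1 h1⟩, h2⟩
  · rintro ⟨⟨h0, h1⟩, h2⟩
    exact ⟨⟨((heq x h2.1 h2.2).1).2 h0, ((heq x h2.1 h2.2).2).2 h1⟩, h2⟩

lemma digit_congr {j k : ℕ} (h1 : 1 ≤ k) (hk : k < j)
    (heq : ∀ k, 1 ≤ k → k < j → ((k ∈ S0' ↔ k ∈ S0) ∧ (k ∈ S1' ↔ k ∈ S1))) :
    digit S0' S1' k = digit S0 S1 k := by
  have hp : parB S0' S1' k = parB S0 S1 k :=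
    parB_congr (fun k' a b => heq k' a (b.trans hk))
  have h0 := (heq k h1 hk).1
  have h1' := (heq k h1 hk).2
  unfold digit
  rw [hp]
  exact if_congr (and_congr h0 h1') rfl (if_congr h0 rfl (if_congr h1' rfl rfl))

lemma tail3 (f : ℕ → ℕ) (hf : ∀ k, f k ≤ 2) :
    ∀ (d a : ℕ), ∑ k ∈ Finset.Ico a (a + d), f k * 3 ^ (a + d - 1 - k) < 3 ^ d := by
  intro d
  induction d with
  | zero =>
    intro a
    simp
  | succ d ih =>
    intro a
    rw [Finset.sum_eq_sum_Ico_succ_bot (by omega : a < a + (d + 1))]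
    have hhead : a + (d + 1) - 1 - a = d := by omega
    have htail : ∑ k ∈ Finset.Ico (a + 1) (a + (d + 1)), f k * 3 ^ (a + (d + 1) - 1 - k) <
        3 ^ d := by
      have h := ih (a + 1)
      have he : (a + 1) + d = a + (d + 1) := by omega
      rw [he] at h
      exact h
    have hfa : f a * 3 ^ (a + (d + 1) - 1 - a) ≤ 2 * 3 ^ d := by
      rw [hhead]
      exact Nat.mul_le_mul_right _ (hf a)
    have h3 : 3 ^ (d + 1) = 2 * 3 ^ d + 3 ^ d := by ring
    omega

lemma tail3' (f : ℕ → ℕ) (hf : ∀ k, f k ≤ 2) {a b : ℕ} (hab : a ≤ b) :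
    ∑ k ∈ Finset.Ico a b, f k * 3 ^ (b - 1 - k) < 3 ^ (b - a) := by
  have h := tail3 f hf (b - a) a
  rwa [show a + (b - a) = b from by omega] at h

lemma rho_lt {j : ℕ} (hj1 : 1 ≤ j) (hjN : j ≤ N)
    (heq : ∀ k, 1 ≤ k → k < j → ((k ∈ S0' ↔ k ∈ S0) ∧ (k ∈ S1' ↔ k ∈ S1)))
    (hd : digit S0' S1' j < digit S0 S1 j) :
    rho N S0' S1' < rho N S0 S1 := by
  unfold rho
  rw [← Finset.sum_Ico_consecutive _ hj1 (by omega : j ≤ N + 1),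
    ← Finset.sum_Ico_consecutive (fun k => digit S0 S1 k * 3 ^ (N - k)) hj1
      (by omega : j ≤ N + 1)]
  have hpre : ∑ k ∈ Finset.Ico 1 j, digit S0' S1' k * 3 ^ (N - k) =
      ∑ k ∈ Finset.Ico 1 j, digit S0 S1 k * 3 ^ (N - k) := by
    refine Finset.sum_congr rfl (fun k hk => ?_)
    rw [Finset.mem_Ico] at hk
    rw [digit_congr hk.1 hk.2 heq]
  rw [hpre]
  have hsuf : ∑ k ∈ Finset.Ico j (N + 1), digit S0' S1' k * 3 ^ (N - k) <
      ∑ k ∈ Finset.Ico j (N + 1), digit S0 S1 k * 3 ^ (N - k) := by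
    rw [Finset.sum_eq_sum_Ico_succ_bot (by omega : j < N + 1),
      Finset.sum_eq_sum_Ico_succ_bot (by omega : j < N + 1)
        (fun k => digit S0 S1 k * 3 ^ (N - k))]
    have htail : ∑ k ∈ Finset.Ico (j + 1) (N + 1), digit S0' S1' k * 3 ^ (N - k) <
        3 ^ (N - j) := by
      have h := tail3' (fun k => digit S0' S1' k) (fun k => digit_le2)
        (by omega : j + 1 ≤ N + 1)
      have he : ∑ k ∈ Finset.Ico (j + 1) (N + 1), digit S0' S1' k * 3 ^ (N + 1 - 1 - k) =
          ∑ k ∈ Finset.Ico (j + 1) (N + 1), digit S0' S1' k * 3 ^ (N - k) := by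
        refine Finset.sum_congr rfl (fun k _ => ?_)
        have hee : N + 1 - 1 - k = N - k := by omega
        rw [hee]
      rw [he] at h
      have he2 : N + 1 - (j + 1) = N - j := by omega
      rwa [he2] at h
    have hmul : (digit S0' S1' j + 1) * 3 ^ (N - j) ≤ digit S0 S1 j * 3 ^ (N - j) :=
      Nat.mul_le_mul_right _ (by omega)
    have hpos : (0 : ℕ) ≤ ∑ k ∈ Finset.Ico (j + 1) (N + 1), digit S0 S1 k * 3 ^ (N - k) :=
      Nat.zero_le _
    have hexp : (digit S0' S1' j + 1) * 3 ^ (N - j) =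
        digit S0' S1' j * 3 ^ (N - j) + 3 ^ (N - j) := by ring
    omega
  omega

end Rho


section PairCmp

variable {m n N : ℕ} {T0 T1 : Finset ℕ}

lemma shiftge_not_mem (d : ℕ) (X : Finset ℕ) : d ∉ X.image (shiftge d) := by
  intro h
  obtain ⟨x, _, he⟩ := Finset.mem_image.1 h
  unfold shiftge at he
  split_ifs at he <;> omega

lemma pair0_heq (hV : VData m n T0 T1) : ∀ k, 1 ≤ k → k < T1.sup id →
    ((k ∈ T0.image (shiftge (T1.sup id)) ↔ k ∈ T0) ∧
     (k ∈ T1 ∪ Finset.Ico (T0.sup id + 2) (T0.sup id + n + 3 - T1.card) ↔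
      k ∈ T1 ∪ Finset.Ico (T0.sup id + 1) (T0.sup id + n + 2 - T1.card))) := by
  intro k h1 hk
  have hdT := hV.d_le_T
  constructor
  · rw [mem_image_shiftge_iff hV]
    constructor
    · rintro (⟨_, h⟩ | ⟨h, _⟩)
      · exact h
      · omega
    · intro h
      exact Or.inl ⟨hk, h⟩
  · simp only [Finset.mem_union, Finset.mem_Ico]
    constructor
    · rintro (h | h)
      · exact Or.inl h
      · omega
    · rintro (h | h)
      · exact Or.inl h
      · omega

lemma digit_pair0_A (hV : VData m n T0 T1) :
    digit T0 (T1 ∪ Finset.Ico (T0.sup id + 1) (T0.sup id + n + 2 - T1.card))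
      (T1.sup id) = 1 := by
  unfold digit
  rw [if_pos ⟨hV.2.2.2.2.2, Finset.mem_union_left _ (supid_mem ⟨0, hV.2.1⟩)⟩]

lemma digit_pair0_B (hV : VData m n T0 T1) :
    digit (T0.image (shiftge (T1.sup id)))
      (T1 ∪ Finset.Ico (T0.sup id + 2) (T0.sup id + n + 3 - T1.card)) (T1.sup id) =
    if parB T0 (T1 ∪ Finset.Ico (T0.sup id + 1) (T0.sup id + n + 2 - T1.card))
        (T1.sup id) % 2 = 0 then 2 else 0 := by
  have h0 := shiftge_not_mem (T1.sup id) T0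
  unfold digit
  rw [if_neg (fun hc => h0 hc.1), if_neg h0,
    if_pos (Finset.mem_union_left _ (supid_mem ⟨0, hV.2.1⟩)),
    parB_congr (pair0_heq hV)]

lemma rho_pair0_even (hV : VData m n T0 T1) (hd : T1.sup id ≠ 0) (hN : T1.sup id ≤ N)
    (hp : parB T0 (T1 ∪ Finset.Ico (T0.sup id + 1) (T0.sup id + n + 2 - T1.card))
      (T1.sup id) % 2 = 0) :
    rho N T0 (T1 ∪ Finset.Ico (T0.sup id + 1) (T0.sup id + n + 2 - T1.card)) <
      rho N (T0.image (shiftge (T1.sup id)))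
        (T1 ∪ Finset.Ico (T0.sup id + 2) (T0.sup id + n + 3 - T1.card)) := by
  refine rho_lt (by omega) hN (fun k h1 hk => ?_) ?_
  · have h := pair0_heq hV k h1 hk
    exact ⟨h.1.symm, h.2.symm⟩
  · rw [digit_pair0_A hV, digit_pair0_B hV, if_pos hp]
    omega

lemma rho_pair0_odd (hV : VData m n T0 T1) (hd : T1.sup id ≠ 0) (hN : T1.sup id ≤ N)
    (hp : parB T0 (T1 ∪ Finset.Ico (T0.sup id + 1) (T0.sup id + n + 2 - T1.card))
      (T1.sup id) % 2 ≠ 0) :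
    rho N (T0.image (shiftge (T1.sup id)))
        (T1 ∪ Finset.Ico (T0.sup id + 2) (T0.sup id + n + 3 - T1.card)) <
      rho N T0 (T1 ∪ Finset.Ico (T0.sup id + 1) (T0.sup id + n + 2 - T1.card)) := by
  refine rho_lt (by omega) hN (pair0_heq hV) ?_
  rw [digit_pair0_A hV, digit_pair0_B hV, if_neg hp]
  omega

lemma pair1_heq (hV : VData n m T1 T0) : ∀ k, 1 ≤ k → k < T0.sup id →
    ((k ∈ T0 ∪ Finset.Ico (T1.sup id + 2) (T1.sup id + m + 3 - T0.card) ↔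
      k ∈ T0 ∪ Finset.Ico (T1.sup id + 1) (T1.sup id + m + 2 - T0.card)) ∧
     (k ∈ T1.image (shiftge (T0.sup id)) ↔ k ∈ T1)) := by
  intro k h1 hk
  have hdT := hV.d_le_T
  constructor
  · simp only [Finset.mem_union, Finset.mem_Ico]
    constructor
    · rintro (h | h)
      · exact Or.inl h
      · omega
    · rintro (h | h)
      · exact Or.inl h
      · omega
  · rw [mem_image_shiftge_iff hV]
    constructor
    · rintro (⟨_, h⟩ | ⟨h, _⟩)
      · exact h
      · omega
    · intro h
      exact Or.inl ⟨hk, h⟩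

lemma digit_pair1_A (hV : VData n m T1 T0) :
    digit (T0 ∪ Finset.Ico (T1.sup id + 1) (T1.sup id + m + 2 - T0.card)) T1
      (T0.sup id) = 1 := by
  unfold digit
  rw [if_pos ⟨Finset.mem_union_left _ (supid_mem ⟨0, hV.2.1⟩), hV.2.2.2.2.2⟩]

lemma digit_pair1_B (hV : VData n m T1 T0) :
    digit (T0 ∪ Finset.Ico (T1.sup id + 2) (T1.sup id + m + 3 - T0.card))
      (T1.image (shiftge (T0.sup id))) (T0.sup id) =
    if parB (T0 ∪ Finset.Ico (T1.sup id + 1) (T1.sup id + m + 2 - T0.card)) T1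
        (T0.sup id) % 2 = 0 then 0 else 2 := by
  have h0 := shiftge_not_mem (T0.sup id) T1
  unfold digit
  rw [if_neg (fun hc => h0 hc.2),
    if_pos (Finset.mem_union_left _ (supid_mem ⟨0, hV.2.1⟩)),
    parB_congr (pair1_heq hV)]

lemma rho_pair1_even (hV : VData n m T1 T0) (hd : T0.sup id ≠ 0) (hN : T0.sup id ≤ N)
    (hp : parB (T0 ∪ Finset.Ico (T1.sup id + 1) (T1.sup id + m + 2 - T0.card)) T1
      (T0.sup id) % 2 = 0) :
    rho N (T0 ∪ Finset.Ico (T1.sup id + 2) (T1.sup id + m + 3 - T0.card))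
        (T1.image (shiftge (T0.sup id))) <
      rho N (T0 ∪ Finset.Ico (T1.sup id + 1) (T1.sup id + m + 2 - T0.card)) T1 := by
  refine rho_lt (by omega) hN (pair1_heq hV) ?_
  rw [digit_pair1_A hV, digit_pair1_B hV, if_pos hp]
  omega

lemma rho_pair1_odd (hV : VData n m T1 T0) (hd : T0.sup id ≠ 0) (hN : T0.sup id ≤ N)
    (hp : parB (T0 ∪ Finset.Ico (T1.sup id + 1) (T1.sup id + m + 2 - T0.card)) T1
      (T0.sup id) % 2 ≠ 0) :
    rho N (T0 ∪ Finset.Ico (T1.sup id + 1) (T1.sup id + m + 2 - T0.card)) T1 <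
      rho N (T0 ∪ Finset.Ico (T1.sup id + 2) (T1.sup id + m + 3 - T0.card))
        (T1.image (shiftge (T0.sup id))) := by
  refine rho_lt (by omega) hN (fun k h1 hk => ?_) ?_
  · have h := pair1_heq hV k h1 hk
    exact ⟨h.1.symm, h.2.symm⟩
  · rw [digit_pair1_A hV, digit_pair1_B hV, if_neg hp]
    omega

end PairCmp


section Moves

variable {m n : ℕ} {S0 S1 T0 T1 : Finset ℕ}

lemma EData_swap (h : EData m n S0 S1) : EData n m S1 S0 :=
  ⟨h.2.1, h.1, h.2.2.2.1, h.2.2.1, by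
    have := h.2.2.2.2
    rwa [Finset.union_comm] at this⟩

lemma VData.T_le (hV : VData m n T0 T1) : T0.sup id ≤ m + n := by
  obtain ⟨h00, h01, hc0, hc1, hdc, hsup⟩ := hV
  have hu : T0 ∪ T1 = Finset.range (T0.sup id + 1) :=
    VData.union_eq ⟨h00, h01, hc0, hc1, hdc, hsup⟩
  have hci := Finset.card_union_add_card_inter T0 T1
  have hint : 1 ≤ (T0 ∩ T1).card :=
    Finset.card_pos.2 ⟨0, Finset.mem_inter.2 ⟨h00, h01⟩⟩
  rw [hu, Finset.card_range] at hci
  omega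

lemma ghost_cases0 (hED : EData m n S0 S1) :
    ∃ T0 T1, VData m n T0 T1 ∧ T1.sup id = (trunc S0 S1).sup id ∧
      ghostTr {0, 1} ∅ {1} (eTr S0 S1) = eTr T0 T1 := by
  obtain ⟨h00, h01, hc0, hc1, hdc⟩ := hED
  have hq : S0.sup id ∈ S0 := supid_mem ⟨0, h00⟩
  by_cases hb : (trunc S0 S1).sup id ∈ S0
  · refine ⟨S0, trunc S0 S1, ⟨h00, zero_mem_trunc h01, hc0, ?_, ?_, hb⟩, rfl,
      ghost1_eval_case1 hdc h00 h01 hb⟩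
    · exact le_trans (Finset.card_le_card trunc_subset) (le_of_eq hc1)
    · have hU : S0 ∪ trunc S0 S1 = Finset.range (S0.sup id + 1) := by
        ext x
        simp only [Finset.mem_union, Finset.mem_range]
        constructor
        · rintro (h | h)
          · exact Nat.lt_succ_of_le (le_supid h)
          · have := Finset.mem_range.1 (Finset.mem_inter.1 h).2
            omega
        · intro hx
          exact mem_or_trunc hdc h00 (by omega)
      rw [hU]
      exact DC_range _
  · set b := (trunc S0 S1).sup id with hbdef
    have hbmem : b ∈ trunc S0 S1 := supid_mem ⟨0, zero_mem_trunc h01⟩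
    have hbne : b ≠ 0 := fun h => hb (h ▸ h00)
    have hbq : b < S0.sup id := by
      have h1 : b ≤ S0.sup id := trunc_le hbmem
      rcases lt_or_eq_of_le h1 with h | h
      · exact h
      · exact absurd (h ▸ hq) hb
    have hb1 : b + 1 ∈ S0 := by
      rcases mem_or_trunc hdc h00 (by omega : b + 1 ≤ S0.sup id) with h | h
      · exact h
      · exact absurd (le_supid h) (by omega)
    have hinj : Set.InjOn (clps b) S0 := by
      intro x hx y hy hxy
      have hxb : x ≠ b := fun h => hb (h ▸ hx)
      have hyb : y ≠ b := fun h => hb (h ▸ hy)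
      unfold clps at hxy
      split_ifs at hxy <;> omega
    refine ⟨S0.image (clps b), trunc S0 S1,
      ⟨?_, zero_mem_trunc h01, ?_, ?_, ?_, ?_⟩, rfl,
      ghost1_eval_case2 hdc h00 h01 hb⟩
    · exact Finset.mem_image.2 ⟨0, h00, by simp [clps]⟩
    · rw [Finset.card_image_of_injOn hinj]
      exact hc0
    · exact le_trans (Finset.card_le_card trunc_subset) (le_of_eq hc1)
    · have hU : S0.image (clps b) ∪ trunc S0 S1 = Finset.range (S0.sup id) := by
        ext x
        simp only [Finset.mem_union, Finset.mem_range]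
        constructor
        · rintro (h | h)
          · obtain ⟨y, hy, rfl⟩ := Finset.mem_image.1 h
            have hyb : y ≠ b := fun h => hb (h ▸ hy)
            have hyq := le_supid hy
            unfold clps
            split_ifs <;> omega
          · have hxb := le_supid h
            omega
        · intro hx
          rcases lt_trichotomy x b with hlt | rfl | hgt
          · rcases mem_or_trunc hdc h00 (by omega : x ≤ S0.sup id) with h | h
            · refine Or.inl (Finset.mem_image.2 ⟨x, h, ?_⟩)
              unfold clps
              rw [if_pos (by omega)]
            · exact Or.inr h
          · exact Or.inr hbmem
          · rcases mem_or_trunc hdc h00 (by omega : x + 1 ≤ S0.sup id) with h | h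
            · refine Or.inl (Finset.mem_image.2 ⟨x + 1, h, ?_⟩)
              unfold clps
              rw [if_neg (by omega)]
              omega
            · exact absurd (le_supid h) (by omega)
      rw [hU]
      exact DC_range _
    · refine Finset.mem_image.2 ⟨b + 1, hb1, ?_⟩
      unfold clps
      rw [if_neg (by omega)]
      omega

lemma ghost_cases1 (hED : EData m n S0 S1) :
    ∃ T0 T1, VData n m T1 T0 ∧ T0.sup id = (trunc S1 S0).sup id ∧
      IncTo (mkE S0 S1) (mkV1 T0 T1) := by
  obtain ⟨Ta, Tb, hV, hsup, hg⟩ := ghost_cases0 (EData_swap hED)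
  have hI : IncTo (mkE S1 S0) (mkV0 Ta Tb) := incTo_of_ghost hg
  have hI2 := incTo_swapT hI
  rw [swapT_mkE, swapT_mkV0] at hI2
  exact ⟨Tb, Ta, hV, hsup, hI2⟩

lemma incident_eq1 (hV : VData n m T1 T0) {e : Triple} (hE : IsEdge m n e)
    (hI : IncTo e (mkV1 T0 T1)) :
    e = swapT (eA m T1 T0) ∨ (T0.sup id ≠ 0 ∧ e = swapT (eB m T1 T0)) := by
  have hE' := isEdge_swapT hE
  have hI' := incTo_swapT hI
  rw [swapT_mkV1] at hI'
  rcases incident_eq hV hE' hI' with h | ⟨hd, h⟩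
  · left
    have := congrArg swapT h
    rwa [swapT_swapT] at this
  · right
    refine ⟨hd, ?_⟩
    have := congrArg swapT h
    rwa [swapT_swapT] at this

lemma swap_eA1 : swapT (eA m T1 T0) =
    mkE (T0 ∪ Finset.Ico (T1.sup id + 1) (T1.sup id + m + 2 - T0.card)) T1 :=
  swapT_mkE

lemma swap_eB1 : swapT (eB m T1 T0) =
    mkE (T0 ∪ Finset.Ico (T1.sup id + 2) (T1.sup id + m + 3 - T0.card))
      (T1.image (shiftge (T0.sup id))) :=
  swapT_mkE

lemma incTo_fA (hV : VData n m T1 T0) :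
    IncTo (mkE (T0 ∪ Finset.Ico (T1.sup id + 1) (T1.sup id + m + 2 - T0.card)) T1)
      (mkV1 T0 T1) := by
  have h := incTo_swapT (incTo_eA hV)
  rwa [swap_eA1, swapT_mkV0] at h

lemma incTo_fB (hV : VData n m T1 T0) (hd : T0.sup id ≠ 0) :
    IncTo (mkE (T0 ∪ Finset.Ico (T1.sup id + 2) (T1.sup id + m + 3 - T0.card))
      (T1.image (shiftge (T0.sup id)))) (mkV1 T0 T1) := by
  have h := incTo_swapT (incTo_eB hV hd)
  rwa [swap_eB1, swapT_mkV0] at h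

lemma move0 (hED : EData m n S0 S1) (hj0 : (trunc S0 S1).sup id ≠ 0)
    (hdec : ((trunc S0 S1).sup id ∈ S0 ∧ parB S0 S1 ((trunc S0 S1).sup id) % 2 ≠ 0) ∨
            ((trunc S0 S1).sup id ∉ S0 ∧ parB S0 S1 ((trunc S0 S1).sup id) % 2 = 0)) :
    ∃ S0' S1', EData m n S0' S1' ∧ rho (m + n) S0' S1' < rho (m + n) S0 S1 ∧
      ∃ v, IsVert m n v ∧ IncTo (mkE S0 S1) v ∧ IncTo (mkE S0' S1') v := by
  obtain ⟨T0, T1, hV, hsup, hg⟩ := ghost_cases0 hED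
  have hIv : IncTo (mkE S0 S1) (mkV0 T0 T1) := incTo_of_ghost hg
  have hd : T1.sup id ≠ 0 := by rw [hsup]; exact hj0
  have hdN : T1.sup id ≤ m + n := le_trans hV.d_le_T hV.T_le
  rcases incident_eq hV (isEdge_mkE hED) hIv with he | ⟨_, he⟩
  · have he' : mkE S0 S1 = mkE T0
        (T1 ∪ Finset.Ico (T0.sup id + 1) (T0.sup id + n + 2 - T1.card)) := he
    obtain ⟨h0, h1⟩ := mkE_inj he'
    rcases hdec with ⟨_, hodd⟩ | ⟨hnot, _⟩
    · rw [← hsup] at hodd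
      rw [h0, h1] at hodd
      refine ⟨T0.image (shiftge (T1.sup id)),
        T1 ∪ Finset.Ico (T0.sup id + 2) (T0.sup id + n + 3 - T1.card),
        EData_eB hV hd, ?_, mkV0 T0 T1, isVert_mkV0 hV, hIv, incTo_eB hV hd⟩
      rw [h0, h1]
      exact rho_pair0_odd hV hd hdN hodd
    · exfalso
      apply hnot
      rw [← hsup, h0]
      exact hV.2.2.2.2.2
  · have he' : mkE S0 S1 = mkE (T0.image (shiftge (T1.sup id)))
        (T1 ∪ Finset.Ico (T0.sup id + 2) (T0.sup id + n + 3 - T1.card)) := he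
    obtain ⟨h0, h1⟩ := mkE_inj he'
    rcases hdec with ⟨hin, _⟩ | ⟨_, heven⟩
    · exfalso
      rw [← hsup, h0] at hin
      exact shiftge_not_mem _ _ hin
    · rw [← hsup] at heven
      rw [h0, h1] at heven
      rw [parB_congr (pair0_heq hV)] at heven
      refine ⟨T0, T1 ∪ Finset.Ico (T0.sup id + 1) (T0.sup id + n + 2 - T1.card),
        EData_eA hV, ?_, mkV0 T0 T1, isVert_mkV0 hV, hIv, incTo_eA hV⟩
      rw [h0, h1]
      exact rho_pair0_even hV hd hdN heven

lemma move1 (hED : EData m n S0 S1) (hj1 : (trunc S1 S0).sup id ≠ 0)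
    (hdec : ((trunc S1 S0).sup id ∈ S1 ∧ parB S0 S1 ((trunc S1 S0).sup id) % 2 = 0) ∨
            ((trunc S1 S0).sup id ∉ S1 ∧ parB S0 S1 ((trunc S1 S0).sup id) % 2 ≠ 0)) :
    ∃ S0' S1', EData m n S0' S1' ∧ rho (m + n) S0' S1' < rho (m + n) S0 S1 ∧
      ∃ v, IsVert m n v ∧ IncTo (mkE S0 S1) v ∧ IncTo (mkE S0' S1') v := by
  obtain ⟨T0, T1, hV, hsup, hIv⟩ := ghost_cases1 hED
  have hd : T0.sup id ≠ 0 := by rw [hsup]; exact hj1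
  have hdN : T0.sup id ≤ m + n := by
    have h1 : T0.sup id ≤ T1.sup id := hV.d_le_T
    have h2 : T1.sup id ≤ n + m := hV.T_le
    omega
  rcases incident_eq1 hV (isEdge_mkE hED) hIv with he | ⟨_, he⟩
  · rw [swap_eA1] at he
    obtain ⟨h0, h1⟩ := mkE_inj he
    rcases hdec with ⟨_, heven⟩ | ⟨hnot, _⟩
    · rw [← hsup] at heven
      rw [h0, h1] at heven
      refine ⟨T0 ∪ Finset.Ico (T1.sup id + 2) (T1.sup id + m + 3 - T0.card),
        T1.image (shiftge (T0.sup id)), ?_, ?_, mkV1 T0 T1, isVert_mkV1 hV, hIv,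
        incTo_fB hV hd⟩
      · have h := EData_swap (EData_eB hV hd)
        exact h
      · rw [h0, h1]
        exact rho_pair1_even hV hd hdN heven
    · exfalso
      apply hnot
      rw [← hsup, h1]
      exact hV.2.2.2.2.2
  · rw [swap_eB1] at he
    obtain ⟨h0, h1⟩ := mkE_inj he
    rcases hdec with ⟨hin, _⟩ | ⟨_, hodd⟩
    · exfalso
      rw [← hsup, h1] at hin
      exact shiftge_not_mem _ _ hin
    · rw [← hsup] at hodd
      rw [h0, h1] at hodd
      rw [parB_congr (pair1_heq hV)] at hodd
      refine ⟨T0 ∪ Finset.Ico (T1.sup id + 1) (T1.sup id + m + 2 - T0.card), T1,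
        ?_, ?_, mkV1 T0 T1, isVert_mkV1 hV, hIv, incTo_fA hV⟩
      · have h := EData_swap (EData_eA hV)
        exact h
      · rw [h0, h1]
        exact rho_pair1_odd hV hd hdN hodd

end Moves


section Master

variable {m n : ℕ} {S0 S1 : Finset ℕ}

lemma parB_split {j j' : ℕ} (h1 : 1 ≤ j) (hjj : j ≤ j') :
    parB S0 S1 j' = parB S0 S1 j + ((S0 ∩ S1) ∩ Finset.Ico j j').card := by
  unfold parB
  rw [← Finset.card_union_of_disjoint (by
    rw [Finset.disjoint_left]
    intro a ha hb
    have h1 := (Finset.mem_inter.1 ha).2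
    have h2 := (Finset.mem_inter.1 hb).2
    rw [Finset.mem_Ico] at h1 h2
    omega)]
  congr 1
  rw [← Finset.inter_union_distrib_left, Finset.Ico_union_Ico_eq_Ico h1 hjj]

lemma exists_smaller (hED : EData m n S0 S1) (hj0ne : (trunc S0 S1).sup id ≠ 0) :
    ∃ S0' S1', EData m n S0' S1' ∧ rho (m + n) S0' S1' < rho (m + n) S0 S1 ∧
      ∃ v, IsVert m n v ∧ IncTo (mkE S0 S1) v ∧ IncTo (mkE S0' S1') v := by
  obtain ⟨h00, h01, hc0, hc1, hdc⟩ := hED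
  have hED' : EData m n S0 S1 := ⟨h00, h01, hc0, hc1, hdc⟩
  set j0 := (trunc S0 S1).sup id with hj0def
  set j1 := (trunc S1 S0).sup id with hj1def
  have hj0mem : j0 ∈ trunc S0 S1 := supid_mem ⟨0, zero_mem_trunc h01⟩
  have hj0S1 : j0 ∈ S1 := (Finset.mem_inter.1 hj0mem).1
  have hj0q0 : j0 ≤ S0.sup id := trunc_le hj0mem
  have hj1mem : j1 ∈ trunc S1 S0 := supid_mem ⟨0, zero_mem_trunc h00⟩
  have hj1S0 : j1 ∈ S0 := (Finset.mem_inter.1 hj1mem).1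
  have hj1q1 : j1 ≤ S1.sup id := trunc_le hj1mem
  have hj0q1 : j0 ≤ S1.sup id := le_supid hj0S1
  have hj1q0 : j1 ≤ S0.sup id := le_supid hj1S0
  have F2 : ∀ k, k ∈ S1 → k ≤ S0.sup id → k ≤ j0 := fun k hk hkq =>
    le_supid (Finset.mem_inter.2 ⟨hk, Finset.mem_range.2 (by omega)⟩)
  have F3 : ∀ k, k ∈ S0 → k ≤ S1.sup id → k ≤ j1 := fun k hk hkq =>
    le_supid (Finset.mem_inter.2 ⟨hk, Finset.mem_range.2 (by omega)⟩)
  have hj0pos : 1 ≤ j0 := Nat.one_le_iff_ne_zero.2 hj0ne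
  by_cases hB0 : j0 ∈ S0
  · by_cases hP0 : parB S0 S1 j0 % 2 = 0
    · have hj0le : j0 ≤ j1 := F3 j0 hB0 hj0q1
      have hj1ne : j1 ≠ 0 := by omega
      rcases eq_or_lt_of_le hj0le with heq | hlt
      · refine move1 hED' hj1ne (Or.inl ⟨?_, ?_⟩)
        · show j1 ∈ S1
          rw [← heq]
          exact hj0S1
        · show parB S0 S1 j1 % 2 = 0
          rw [← heq]
          exact hP0
      · have hj1nS1 : j1 ∉ S1 := fun h => by
          have := F2 j1 h hj1q0
          omega
        have hone : ((S0 ∩ S1) ∩ Finset.Ico j0 j1) = {j0} := by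
          ext x
          simp only [Finset.mem_inter, Finset.mem_Ico, Finset.mem_singleton]
          constructor
          · rintro ⟨⟨hx0, hx1⟩, hge, hlt'⟩
            have := F2 x hx1 (by omega)
            omega
          · rintro rfl
            exact ⟨⟨hB0, hj0S1⟩, le_refl _, hlt⟩
        have hpar : parB S0 S1 j1 % 2 ≠ 0 := by
          rw [parB_split hj0pos (le_of_lt hlt), hone, Finset.card_singleton]
          omega
        exact move1 hED' hj1ne (Or.inr ⟨hj1nS1, hpar⟩)
    · exact move0 hED' hj0ne (Or.inl ⟨hB0, hP0⟩)
  · by_cases hP0 : parB S0 S1 j0 % 2 = 0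
    · exact move0 hED' hj0ne (Or.inr ⟨hB0, hP0⟩)
    · have hj1ne : j1 ≠ 0 := by
        intro h
        apply hP0
        have hempty : (S0 ∩ S1) ∩ Finset.Ico 1 j0 = ∅ := by
          rw [Finset.eq_empty_iff_forall_notMem]
          intro x hx
          obtain ⟨hxi, hxI⟩ := Finset.mem_inter.1 hx
          obtain ⟨hx0, hx1⟩ := Finset.mem_inter.1 hxi
          rw [Finset.mem_Ico] at hxI
          have := F3 x hx0 (le_supid hx1)
          omega
        unfold parB
        rw [hempty]
        simp
      rcases lt_trichotomy j1 j0 with hlt | heq | hgt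
      · have hj1pos : 1 ≤ j1 := Nat.one_le_iff_ne_zero.2 hj1ne
        by_cases hj1S1 : j1 ∈ S1
        · have hone : (S0 ∩ S1) ∩ Finset.Ico j1 j0 = {j1} := by
            ext x
            simp only [Finset.mem_inter, Finset.mem_Ico, Finset.mem_singleton]
            constructor
            · rintro ⟨⟨hx0, hx1⟩, hge, hlt'⟩
              have := F3 x hx0 (le_supid hx1)
              omega
            · rintro rfl
              exact ⟨⟨hj1S0, hj1S1⟩, le_refl _, hlt⟩
          have hpar : parB S0 S1 j1 % 2 = 0 := by
            have hs := parB_split (S0 := S0) (S1 := S1) hj1pos (le_of_lt hlt)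
            rw [hone, Finset.card_singleton] at hs
            omega
          exact move1 hED' hj1ne (Or.inl ⟨hj1S1, hpar⟩)
        · have hzero : (S0 ∩ S1) ∩ Finset.Ico j1 j0 = ∅ := by
            rw [Finset.eq_empty_iff_forall_notMem]
            intro x hx
            obtain ⟨hxi, hxI⟩ := Finset.mem_inter.1 hx
            obtain ⟨hx0, hx1⟩ := Finset.mem_inter.1 hxi
            rw [Finset.mem_Ico] at hxI
            have := F3 x hx0 (le_supid hx1)
            have hxj1 : x = j1 := by omega
            exact hj1S1 (hxj1 ▸ hx1)
          have hpar : parB S0 S1 j1 % 2 ≠ 0 := by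
            have hs := parB_split (S0 := S0) (S1 := S1) hj1pos (le_of_lt hlt)
            rw [hzero, Finset.card_empty] at hs
            omega
          exact move1 hED' hj1ne (Or.inr ⟨hj1S1, hpar⟩)
      · exact absurd (heq ▸ hj1S0) hB0
      · have hj1nS1 : j1 ∉ S1 := fun h => by
          have := F2 j1 h hj1q0
          omega
        have hzero : (S0 ∩ S1) ∩ Finset.Ico j0 j1 = ∅ := by
          rw [Finset.eq_empty_iff_forall_notMem]
          intro x hx
          obtain ⟨hxi, hxI⟩ := Finset.mem_inter.1 hx
          obtain ⟨hx0, hx1⟩ := Finset.mem_inter.1 hxi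
          rw [Finset.mem_Ico] at hxI
          have := F2 x hx1 (by omega)
          have hxj0 : x = j0 := by omega
          exact hB0 (hxj0 ▸ hx0)
        have hpar : parB S0 S1 j1 % 2 ≠ 0 := by
          have hs := parB_split (S0 := S0) (S1 := S1) hj0pos (le_of_lt hgt)
          rw [hzero, Finset.card_empty] at hs
          omega
        exact move1 hED' hj1ne (Or.inr ⟨hj1nS1, hpar⟩)

end Master


section Connectivity

variable {m n : ℕ}

/-- the endpoint v⁰ as a vertex of the graph -/
noncomputable def vert0 (m n : ℕ) : {v : Triple // IsVert m n v} :=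
  ⟨mkV0 (Finset.range (m + 1)) {0}, isVert_mkV0 VData_v0⟩

lemma reach_v0 : ∀ (K : ℕ) (S0 S1 : Finset ℕ), rho (m + n) S0 S1 < K →
    EData m n S0 S1 → ∀ (v : Triple) (hv : IsVert m n v), IncTo (mkE S0 S1) v →
    (ISGraph m n).Reachable ⟨v, hv⟩ (vert0 m n) := by
  intro K
  induction K with
  | zero =>
    intro S0 S1 hrho
    omega
  | succ K ih =>
    intro S0 S1 hrho hED v hv hI
    by_cases hj0 : (trunc S0 S1).sup id = 0
    · -- the active-0 face of this edge is v⁰ itself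
      obtain ⟨T0, T1, hV, hsup, hg⟩ := ghost_cases0 hED
      have hd0 : T1.sup id = 0 := hsup.trans hj0
      obtain ⟨e0, e1⟩ := d_zero_vertex hV hd0
      have hIv : IncTo (mkE S0 S1) (mkV0 (Finset.range (m + 1)) {0}) := by
        rw [← e0, ← e1]
        exact incTo_of_ghost hg
      by_cases hveq : v = mkV0 (Finset.range (m + 1)) {0}
      · have : (⟨v, hv⟩ : {v : Triple // IsVert m n v}) = vert0 m n :=
          Subtype.ext hveq
        rw [this]
      · have hadj : (ISGraph m n).Adj ⟨v, hv⟩ (vert0 m n) :=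
          ⟨fun h => hveq (congrArg Subtype.val h),
            mkE S0 S1, isEdge_mkE hED, hI, hIv⟩
        exact hadj.reachable
    · obtain ⟨S0', S1', hED', hlt, u, hu, hIu, hIu'⟩ := exists_smaller hED hj0
      have hreach_u : (ISGraph m n).Reachable ⟨u, hu⟩ (vert0 m n) :=
        ih S0' S1' (by omega) hED' u hu hIu'
      by_cases hveq : v = u
      · have : (⟨v, hv⟩ : {v : Triple // IsVert m n v}) = ⟨u, hu⟩ :=
          Subtype.ext hveq
        rw [this]
        exact hreach_u
      · have hadj : (ISGraph m n).Adj ⟨v, hv⟩ ⟨u, hu⟩ :=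
          ⟨fun h => hveq (congrArg Subtype.val h),
            mkE S0 S1, isEdge_mkE hED, hI, hIu⟩
        exact hadj.reachable.trans hreach_u

lemma all_reach_v0 (v : {v : Triple // IsVert m n v}) :
    (ISGraph m n).Reachable v (vert0 m n) := by
  rcases isVert_iff.1 v.2 with ⟨T0, T1, hV, hveq⟩ | ⟨T0, T1, hV, hveq⟩
  · have hI : IncTo (eA n T0 T1) v.1 := by
      rw [hveq]
      exact incTo_eA hV
    have h := reach_v0 (rho (m + n) T0
        (T1 ∪ Finset.Ico (T0.sup id + 1) (T0.sup id + n + 2 - T1.card)) + 1)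
      T0 (T1 ∪ Finset.Ico (T0.sup id + 1) (T0.sup id + n + 2 - T1.card))
      (by omega) (EData_eA hV) v.1 v.2 hI
    simpa using h
  · have hI : IncTo (mkE (T0 ∪ Finset.Ico (T1.sup id + 1) (T1.sup id + m + 2 - T0.card))
        T1) v.1 := by
      rw [hveq]
      exact incTo_fA hV
    have h := reach_v0 (rho (m + n)
        (T0 ∪ Finset.Ico (T1.sup id + 1) (T1.sup id + m + 2 - T0.card)) T1 + 1)
      (T0 ∪ Finset.Ico (T1.sup id + 1) (T1.sup id + m + 2 - T0.card)) T1
      (by omega) (EData_swap (EData_eA hV)) v.1 v.2 hI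
    simpa using h

lemma connected_IS (hm : 1 ≤ m) (hn : 1 ≤ n) : (ISGraph m n).Connected := by
  rw [SimpleGraph.connected_iff]
  exact ⟨fun u w => (all_reach_v0 u).trans (all_reach_v0 w).symm, ⟨vert0 m n⟩⟩

end Connectivity

end ISAux
/-- for `m, n ≥ 1` the immediate snapshot complex `P(m,n)` is a
subdivided interval: its graph is connected, every vertex lies on exactly two
edges except for the two endpoints
`v⁰ = ((0,1),(0,∅),…,(0,∅))` and `v¹ = ((1,0),(1,∅),…,(1,∅))`,
which lie on exactly one edge (Proposition 4.8 of the paper). -/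
theorem P_mn_subdivided_interval (m n : ℕ) (hm : 1 ≤ m) (hn : 1 ≤ n) :
    (fun (v0 v1 : Triple) =>
      IsVert m n v0 ∧ IsVert m n v1 ∧ v0 ≠ v1 ∧
      (ISGraph m n).Connected ∧
      (∀ v : {v : Triple // IsVert m n v}, v.1 ≠ v0 → v.1 ≠ v1 →
        Nat.card {e : Triple // IsEdge m n e ∧ IncTo e v.1} = 2) ∧
      Nat.card {e : Triple // IsEdge m n e ∧ IncTo e v0} = 1 ∧
      Nat.card {e : Triple // IsEdge m n e ∧ IncTo e v1} = 1)
    ({0}, {1}, fun p => if p = 0 then Finset.range (m + 1)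
      else if p = 1 then {0} else ∅)
    ({1}, {0}, fun p => if p = 1 then Finset.range (n + 1)
      else if p = 0 then {0} else ∅) := by
  refine ⟨?_, ?_, ?_, ?_, ?_, ?_, ?_⟩
  · exact ISAux.isVert_mkV0 ISAux.VData_v0
  · exact ISAux.isVert_mkV1 ISAux.VData_v0
  · exact ISAux.mkV0_ne_mkV1
  · exact ISAux.connected_IS hm hn
  · intro v hv0 hv1
    exact ISAux.deg_interior v.2 hv0 hv1
  · exact ISAux.deg_endpoint0
  · exact ISAux.deg_endpoint1
end

section
/- Given an execution σ = (W_1,…,W_t) of subsets of {0,…,n} in which each p occurs exactly r_p times, let ρ(p,k) be the index of the k-th occurrence of p, and define a binary relation on pairs by z_{p,i} > z_{q,j} iff ρ(p,i) ≥ ρ(q,j+1) (for 1 ≤ i ≤ r_p, 0 ≤ j ≤ r_q); prove that this relation is a strict partial order on the set {(p,i) : p ∈ {0,…,n}, 0 ≤ i ≤ r_p}, i.e., it is never the case that both z_{p,i} > z_{q,j} and z_{q,j} > z_{p,i}, and it is transitive, and that z_{p,r_p} > z_{q,r_q} never holds. -/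
/-- the knowledge relation of an execution `σ = (W_1,…,W_t)` in
which each process `p ∈ {0,…,n}` occurs exactly `r p` times.  With
`M(q,k)` the number of occurrences of `q` among `W_1,…,W_k` and `ρ(p,i)` the
index of the `i`-th occurrence of `p`, the relation
`z_{p,i} > z_{q,j} ⟺ j + 1 ≤ M(q, ρ(p,i))` (equivalently
`ρ(p,i) ≥ ρ(q,j+1)`) is a strict partial order: it is asymmetric and
transitive; moreover no maximal-round element lies below another:
`z_{p,r_p} > z_{q,r_q}` is impossible. -/
theorem execution_knowledge_order (n t : ℕ) (W : ℕ → Finset ℕ) (r : ℕ → ℕ)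
    (M : ℕ → ℕ → ℕ) (ρ : ℕ → ℕ → ℕ)
    (hW : ∀ i, 1 ≤ i → i ≤ t → W i ⊆ Finset.range (n + 1))
    (hM : ∀ p k, M p k = ((Finset.Icc 1 k).filter (fun i => p ∈ W i)).card)
    (hr : ∀ p ∈ Finset.range (n + 1), M p t = r p)
    (hρ : ∀ p ∈ Finset.range (n + 1), ∀ k, 1 ≤ k → k ≤ r p →
      1 ≤ ρ p k ∧ ρ p k ≤ t ∧ p ∈ W (ρ p k) ∧ M p (ρ p k) = k) :
    -- asymmetry: never both `z_{p,i} > z_{q,j}` and `z_{q,j} > z_{p,i}`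
    (∀ p ∈ Finset.range (n + 1), ∀ q ∈ Finset.range (n + 1),
      ∀ i j, 1 ≤ i → i ≤ r p → 1 ≤ j → j ≤ r q →
        ¬(j + 1 ≤ M q (ρ p i) ∧ i + 1 ≤ M p (ρ q j))) ∧
    -- transitivity: `z_{p,i} > z_{q,j}` and `z_{q,j} > z_{s,k}` imply
    -- `z_{p,i} > z_{s,k}`
    (∀ p ∈ Finset.range (n + 1), ∀ q ∈ Finset.range (n + 1),
      ∀ s ∈ Finset.range (n + 1), ∀ i j k, 1 ≤ i → i ≤ r p → 1 ≤ j → j ≤ r q →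
        k ≤ r s → j + 1 ≤ M q (ρ p i) → k + 1 ≤ M s (ρ q j) →
        k + 1 ≤ M s (ρ p i)) ∧
    -- no maximal-round element lies below another
    (∀ p ∈ Finset.range (n + 1), ∀ q ∈ Finset.range (n + 1), p ≠ q → 1 ≤ r p →
      ¬(r q + 1 ≤ M q (ρ p (r p)))) := by
  have Mmono : ∀ p a b, a ≤ b → M p a ≤ M p b := by
    intro p a b hab
    rw [hM, hM]
    exact Finset.card_le_card (Finset.filter_subset_filter _
      (Finset.Icc_subset_Icc_right hab))
  -- if j + 1 ≤ M q (ρ p i) then ρ q j < ρ p i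
  have key : ∀ q ∈ Finset.range (n + 1), ∀ j x, 1 ≤ j → j ≤ r q →
      j + 1 ≤ M q x → ρ q j < x := by
    intro q hq j x hj1 hjr hle
    by_contra h
    push_neg at h
    have := (hρ q hq j hj1 hjr).2.2.2
    have := Mmono q x (ρ q j) h
    omega
  refine ⟨?_, ?_, ?_⟩
  · intro p hp q hq i j hi1 hir hj1 hjr ⟨h1, h2⟩
    have k1 := key q hq j (ρ p i) hj1 hjr h1
    have k2 := key p hp i (ρ q j) hi1 hir h2
    omega
  · intro p hp q hq s hs i j k hi1 hir hj1 hjr hkr h1 h2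
    have k1 := key q hq j (ρ p i) hj1 hjr h1
    have := Mmono s (ρ q j) (ρ p i) (le_of_lt k1)
    omega
  · intro p hp q hq hpq hrp h
    have hρp := (hρ p hp (r p) hrp le_rfl).2.1
    have := Mmono q (ρ p (r p)) t hρp
    have := hr q hq
    omega
end
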